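/- arXiv:2301.10484 — 8 statements merged into one kernel-verified Lean document; each statement's English description precedes it below -/
import Mathlib

section
/- Let X be a real normed space, let m ≥ 1, and for 1 ≤ i ≤ m let Y_i be real Hilbert spaces with linear subspaces Y_i^δ ⊆ Y_i. Let G_i : X → Y_i' be bounded linear maps and let X^δ ⊆ X be a linear subspace. Suppose γ_1, …, γ_m > 0 are constants such that for every i and every z ∈ X^δ one has ‖G_i z‖_{(Y_i^δ)'} ≥ γ_i ‖G_i z‖_{Y_i'}. Let Y := Y_1 × ⋯ × Y_m be the Hilbert-space product with norm ‖y‖_Y² := Σ_{i=1}^m ‖y_i‖_{Y_i}², let Y^δ := Y_1^δ × ⋯ × Y_m^δ ⊆ Y, and define G : X → Y' by (Gz)(y) := Σ_{i=1}^m (G_i z)(y_i). Then for every z ∈ X^δ, ‖Gz‖_{(Y^δ)'} ≥ (min_{1≤i≤m} γ_i) · ‖Gz‖_{Y'}, where moreover ‖Gz‖_{Y'} = (Σ_{i=1}^m ‖G_i z‖_{Y_i'}²)^{1/2}. -/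
/-!
Both claims come from one estimate for functionals of the form `y ↦ ∑ᵢ fᵢ (yᵢ)` on the
`ℓ²`-product: Cauchy–Schwarz bounds such a functional by `(∑ᵢ ‖fᵢ‖²)^{1/2}`, and testing it
against `y = (aᵢ wᵢ)ᵢ`, where `wᵢ` are unit vectors of the discrete subspaces nearly attaining
the discrete dual norms `aᵢ`, shows that its discrete dual norm is at least `(∑ᵢ aᵢ²)^{1/2}`.
Taking the subspaces to be the whole spaces gives the norm identity, and `aᵢ ≥ (min γ) ‖Gᵢ z‖`
then gives the inf-sup bound.
-/

open Finset

section DualNormOn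

variable {E : Type*} [NormedAddCommGroup E] [NormedSpace ℝ E]

/-- The discretized dual norm `‖f‖_{(s)'}`; the quotient is `0` at `y = 0`, and the supremum is
`0` for `s = ∅`. -/
noncomputable def dualNormOn (f : E →L[ℝ] ℝ) (s : Set E) : ℝ :=
  ⨆ y : s, |f y| / ‖(y : E)‖

lemma dualNormOn_nonneg (f : E →L[ℝ] ℝ) (s : Set E) : 0 ≤ dualNormOn f s :=
  Real.iSup_nonneg fun _ => div_nonneg (abs_nonneg _) (norm_nonneg _)

lemma abs_apply_le_dualNormOn_mul (f : E →L[ℝ] ℝ) {s : Set E} {y : E} (hy : y ∈ s) :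
    |f y| ≤ dualNormOn f s * ‖y‖ := by
  rcases eq_or_ne y 0 with rfl | hy0
  · simp
  have hbdd : BddAbove (Set.range fun y : s => |f y| / ‖(y : E)‖) :=
    ⟨‖f‖, Set.forall_mem_range.2 fun y => by simpa using f.ratio_le_opNorm (y : E)⟩
  rw [← div_le_iff₀ (norm_pos_iff.2 hy0)]
  exact le_ciSup hbdd ⟨y, hy⟩

lemma exists_mem_norm_eq_lt_apply_of_lt_abs (f : E →L[ℝ] ℝ) {V : Submodule ℝ E} {x : E}
    (hx : x ∈ V) {t : ℝ} (ht : t < |f x|) : ∃ w ∈ V, ‖w‖ = ‖x‖ ∧ t < f w := by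
  rcases le_or_gt 0 (f x) with hfx | hfx
  · exact ⟨x, hx, rfl, by rwa [abs_of_nonneg hfx] at ht⟩
  · exact ⟨-x, V.neg_mem hx, norm_neg x, by rwa [abs_of_neg hfx, ← map_neg] at ht⟩

lemma exists_norm_le_one_lt_apply_of_lt_opNorm (f : E →L[ℝ] ℝ) {t : ℝ} (ht : t < ‖f‖) :
    ∃ w : E, ‖w‖ ≤ 1 ∧ t < f w := by
  obtain ⟨x, hx, htx⟩ := f.exists_lt_apply_of_lt_opNorm ht
  obtain ⟨w, -, hw, htw⟩ := exists_mem_norm_eq_lt_apply_of_lt_abs f (V := ⊤)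
    Submodule.mem_top htx
  exact ⟨w, hw.trans_le hx.le, htw⟩

lemma exists_mem_norm_le_one_lt_apply_of_lt_dualNormOn (f : E →L[ℝ] ℝ) (V : Submodule ℝ E)
    {t : ℝ} (ht : t < dualNormOn f V) : ∃ w ∈ V, ‖w‖ ≤ 1 ∧ t < f w := by
  rcases lt_or_ge t 0 with ht0 | ht0
  · exact ⟨0, V.zero_mem, by simp, by simpa using ht0⟩
  obtain ⟨⟨y, hyV⟩, hy⟩ := exists_lt_of_lt_ciSup ht
  have hy0 : y ≠ 0 := by
    rintro rfl
    simp only [norm_zero, div_zero] at hy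
    linarith
  have hx : |f (‖y‖⁻¹ • y)| = |f y| / ‖y‖ := by
    rw [map_smul, smul_eq_mul, abs_mul, abs_inv, abs_norm, inv_mul_eq_div]
  obtain ⟨w, hwV, hw, htw⟩ := exists_mem_norm_eq_lt_apply_of_lt_abs f
    (V.smul_mem ‖y‖⁻¹ hyV) (hx ▸ hy)
  refine ⟨w, hwV, ?_, htw⟩
  rw [hw, norm_smul, norm_inv, norm_norm, inv_mul_cancel₀ (norm_ne_zero_iff.2 hy0)]

lemma exists_mem_norm_le_sq_le_apply_add (f : E →L[ℝ] ℝ) (V : Submodule ℝ E) {a : ℝ}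
    (ha : 0 ≤ a) (hnear : ∀ t < a, ∃ w ∈ V, ‖w‖ ≤ 1 ∧ t < f w) {ε : ℝ} (hε : 0 < ε) :
    ∃ w ∈ V, ‖w‖ ≤ a ∧ a ^ 2 ≤ f w + ε := by
  rcases ha.eq_or_lt with rfl | ha
  · exact ⟨0, V.zero_mem, by simp, by simp [hε.le]⟩
  obtain ⟨u, huV, hu, htu⟩ := hnear (a - ε / a) (by linarith [div_pos hε ha])
  refine ⟨a • u, V.smul_mem a huV, ?_, ?_⟩
  · rw [norm_smul, Real.norm_of_nonneg ha.le]
    exact mul_le_of_le_one_right ha.le hu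
  · have := mul_lt_mul_of_pos_left htu ha
    rw [mul_sub, mul_div_cancel₀ _ ha.ne'] at this
    rw [map_smul, smul_eq_mul]
    linarith

end DualNormOn

section PiLp

variable {ι : Type*} [Fintype ι] {Y : ι → Type*} [∀ i, NormedAddCommGroup (Y i)]
  [∀ i, NormedSpace ℝ (Y i)]

lemma abs_sum_apply_le_sqrt_sum_sq_mul_norm (f : ∀ i, Y i →L[ℝ] ℝ) (y : PiLp 2 Y) :
    |∑ i, f i (y i)| ≤ √(∑ i, ‖f i‖ ^ 2) * ‖y‖ :=
  calc |∑ i, f i (y i)| ≤ ∑ i, ‖f i‖ * ‖y i‖ :=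
        (abs_sum_le_sum_abs _ _).trans <| sum_le_sum fun i _ => (f i).le_opNorm (y i)
    _ ≤ √(∑ i, ‖f i‖ ^ 2) * √(∑ i, ‖y i‖ ^ 2) := Real.sum_mul_le_sqrt_mul_sqrt _ _ _
    _ = √(∑ i, ‖f i‖ ^ 2) * ‖y‖ := by rw [PiLp.norm_eq_of_L2]

lemma sqrt_sum_sq_le_of_abs_sum_apply_le (f : ∀ i, Y i →L[ℝ] ℝ) (V : ∀ i, Submodule ℝ (Y i))
    (a : ι → ℝ) (ha : ∀ i, 0 ≤ a i) (hnear : ∀ i, ∀ t < a i, ∃ w ∈ V i, ‖w‖ ≤ 1 ∧ t < f i w)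
    {B : ℝ} (hB0 : 0 ≤ B) (hB : ∀ y : PiLp 2 Y, (∀ i, y i ∈ V i) → |∑ i, f i (y i)| ≤ B * ‖y‖) :
    √(∑ i, a i ^ 2) ≤ B := by
  set S := ∑ i, a i ^ 2
  have hS_le : ∀ ε > 0, S ≤ B * √S + Fintype.card ι * ε := by
    intro ε hε
    choose w hwV hw hfw using fun i =>
      exists_mem_norm_le_sq_le_apply_add (f i) (V i) (ha i) (hnear i) hε
    have hnorm : ‖WithLp.toLp 2 w‖ ≤ √S := by
      rw [PiLp.norm_eq_of_L2]
      exact Real.sqrt_le_sqrt (sum_le_sum fun i _ => by gcongr; exact hw i)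
    calc S ≤ ∑ i, (f i (w i) + ε) := sum_le_sum fun i _ => hfw i
      _ = ∑ i, f i (w i) + Fintype.card ι * ε := by simp [sum_add_distrib]
      _ ≤ B * ‖WithLp.toLp 2 w‖ + Fintype.card ι * ε := by
        gcongr
        exact (le_abs_self _).trans (hB _ hwV)
      _ ≤ B * √S + Fintype.card ι * ε := by gcongr
  have hS : S ≤ B * √S := le_of_forall_pos_le_add fun ε hε => by
    have hc : (0 : ℝ) < Fintype.card ι + 1 := by positivity
    have := hS_le (ε / (Fintype.card ι + 1)) (div_pos hε hc)
    rw [mul_div_assoc'] at this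
    have : Fintype.card ι * ε / (Fintype.card ι + 1) ≤ ε := by
      rw [div_le_iff₀ hc]
      nlinarith
    linarith
  have hsq := Real.sq_sqrt (sum_nonneg fun i _ => sq_nonneg (a i) : 0 ≤ S)
  nlinarith [Real.sqrt_nonneg S]

lemma norm_eq_sqrt_sum_sq_norm (F : PiLp 2 Y →L[ℝ] ℝ) (f : ∀ i, Y i →L[ℝ] ℝ)
    (hF : ∀ y, F y = ∑ i, f i (y i)) : ‖F‖ = √(∑ i, ‖f i‖ ^ 2) := by
  refine le_antisymm (F.opNorm_le_bound (Real.sqrt_nonneg _) fun y => ?_) ?_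
  · rw [Real.norm_eq_abs, hF]
    exact abs_sum_apply_le_sqrt_sum_sq_mul_norm f y
  · refine sqrt_sum_sq_le_of_abs_sum_apply_le f (fun _ => ⊤) _ (fun i => norm_nonneg _)
      (fun i t ht => ?_) (norm_nonneg F) fun y _ => ?_
    · obtain ⟨w, hw, htw⟩ := exists_norm_le_one_lt_apply_of_lt_opNorm (f i) ht
      exact ⟨w, Submodule.mem_top, hw, htw⟩
    · rw [← hF, ← Real.norm_eq_abs]
      exact F.le_opNorm y

lemma sqrt_sum_sq_dualNormOn_le (F : PiLp 2 Y →L[ℝ] ℝ) (f : ∀ i, Y i →L[ℝ] ℝ)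
    (hF : ∀ y, F y = ∑ i, f i (y i)) (V : ∀ i, Submodule ℝ (Y i)) :
    √(∑ i, dualNormOn (f i) (V i) ^ 2) ≤ dualNormOn F {y | ∀ i, y i ∈ V i} :=
  sqrt_sum_sq_le_of_abs_sum_apply_le f V _ (fun _ => dualNormOn_nonneg _ _)
    (fun i _ ht => exists_mem_norm_le_one_lt_apply_of_lt_dualNormOn (f i) (V i) ht)
    (dualNormOn_nonneg _ _) fun y hy => hF y ▸ abs_apply_le_dualNormOn_mul F hy

end PiLp

theorem stmt3_general
    {X : Type*} [NormedAddCommGroup X] [NormedSpace ℝ X]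
    {m : ℕ}
    (Y : Fin m → Type*) [∀ i, NormedAddCommGroup (Y i)] [∀ i, InnerProductSpace ℝ (Y i)]
    (Yd : ∀ i, Submodule ℝ (Y i))
    (G : ∀ i, X →L[ℝ] (Y i →L[ℝ] ℝ))
    (Xδ : Submodule ℝ X)
    (γ : Fin m → ℝ) (hγ : ∀ i, 0 < γ i)
    (hinf : ∀ i, ∀ z ∈ Xδ, γ i * ‖G i z‖ ≤ ⨆ y : Yd i, |G i z (y : Y i)| / ‖(y : Y i)‖)
    (GG : X →L[ℝ] (PiLp 2 Y →L[ℝ] ℝ))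
    (hGG : ∀ (z : X) (y : PiLp 2 Y), GG z y = ∑ i, G i z (y i)) :
    ∀ z ∈ Xδ,
      ((⨅ i, γ i) * ‖GG z‖ ≤
        ⨆ y : {y : PiLp 2 Y // ∀ i, y i ∈ Yd i}, |GG z (y : PiLp 2 Y)| / ‖(y : PiLp 2 Y)‖)
      ∧ ‖GG z‖ = Real.sqrt (∑ i, ‖G i z‖ ^ 2) := by
  intro z hz
  have hnorm := norm_eq_sqrt_sum_sq_norm (GG z) (fun i => G i z) (hGG z)
  refine ⟨?_, hnorm⟩
  have hγ₀ : 0 ≤ ⨅ i, γ i := Real.iInf_nonneg fun i => (hγ i).le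
  calc (⨅ i, γ i) * ‖GG z‖ = √(∑ i, ((⨅ i, γ i) * ‖G i z‖) ^ 2) := by
        simp only [hnorm, mul_pow, ← mul_sum, Real.sqrt_mul (sq_nonneg _), Real.sqrt_sq hγ₀]
    _ ≤ √(∑ i, dualNormOn (G i z) (Yd i) ^ 2) := by
        gcongr with i
        exact (mul_le_mul_of_nonneg_right (ciInf_le (Set.finite_range γ).bddBelow i)
          (norm_nonneg _)).trans (hinf i z hz)
    _ ≤ dualNormOn (GG z) {y | ∀ i, y i ∈ Yd i} :=
        sqrt_sum_sq_dualNormOn_le (GG z) (fun i => G i z) (hGG z) Yd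

/-- Componentwise uniform inf-sup conditions imply the inf-sup condition
for the combined operator `G : X → Y'`, `(Gz)(y) = Σᵢ (Gᵢz)(yᵢ)`, on the Hilbert product
`Y = Y₁ × ⋯ × Y_m` with norm `‖y‖² = Σᵢ ‖yᵢ‖²`, with constant `min_i γᵢ`; moreover
`‖Gz‖_{Y'} = (Σᵢ ‖Gᵢz‖²)^{1/2}`. Discretized dual norms are suprema over the
(nonzero elements of the) discrete subspaces, with the convention `sup ∅ = 0` and the
value `0` at `y = 0`. -/
theorem stmt3
    {X : Type*} [NormedAddCommGroup X] [NormedSpace ℝ X]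
    {m : ℕ} (hm : 0 < m)
    (Y : Fin m → Type*) [∀ i, NormedAddCommGroup (Y i)] [∀ i, InnerProductSpace ℝ (Y i)]
    [∀ i, CompleteSpace (Y i)]
    (Yd : ∀ i, Submodule ℝ (Y i))
    (G : ∀ i, X →L[ℝ] (Y i →L[ℝ] ℝ))
    (Xδ : Submodule ℝ X)
    (γ : Fin m → ℝ) (hγ : ∀ i, 0 < γ i)
    (hinf : ∀ i, ∀ z ∈ Xδ, γ i * ‖G i z‖ ≤ ⨆ y : Yd i, |G i z (y : Y i)| / ‖(y : Y i)‖)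
    (GG : X →L[ℝ] (PiLp 2 Y →L[ℝ] ℝ))
    (hGG : ∀ (z : X) (y : PiLp 2 Y), GG z y = ∑ i, G i z (y i)) :
    ∀ z ∈ Xδ,
      ((⨅ i, γ i) * ‖GG z‖ ≤
        ⨆ y : {y : PiLp 2 Y // ∀ i, y i ∈ Yd i}, |GG z (y : PiLp 2 Y)| / ‖(y : PiLp 2 Y)‖)
      ∧ ‖GG z‖ = Real.sqrt (∑ i, ‖G i z‖ ^ 2) :=
  stmt3_general Y Yd G Xδ γ hγ hinf GG hGG
end

section
/- Let X and Y be real Hilbert spaces, G : X → Y' a bounded linear map, f ∈ Y', and let X^δ ⊆ X and Y^δ ⊆ Y be closed linear subspaces. Then u^δ ∈ X^δ minimizes the functional z ↦ ½·(sup_{0 ≠ y ∈ Y^δ} |(Gz − f)(y)|/‖y‖_Y)² over X^δ if and only if it satisfies the Petrov–Galerkin equations (G u^δ − f)(R^δ G w) = 0 for all w ∈ X^δ. -/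
/-!
The Riesz lift is linear and turns the discrete dual norm of `G z - f` into the Hilbert norm
`‖Rδ f - Rδ (G z)‖`. Minimizing the functional over `Xδ` is therefore a least-squares problem for
the linear map `Rδ ∘ G`, whose solutions are characterized by the normal equations
`⟪Rδ (G uδ - f), Rδ (G w)⟫ = 0`; these are the Petrov–Galerkin equations.
-/

open scoped RealInnerProductSpace

section LeastSquares

variable {E F : Type*} [NormedAddCommGroup F] [InnerProductSpace ℝ F]

theorem Submodule.forall_norm_sub_le_iff_real_inner_eq_zero (K : Submodule ℝ F) {u v : F} (hv : v ∈ K) :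
    (∀ w ∈ K, ‖u - v‖ ≤ ‖u - w‖) ↔ ∀ w ∈ K, ⟪u - v, w⟫ = 0 := by
  have hbdd : BddBelow (Set.range fun w : (K : Set F) => ‖u - w‖) :=
    ⟨0, by rintro _ ⟨w, rfl⟩; exact norm_nonneg _⟩
  rw [← K.norm_eq_iInf_iff_real_inner_eq_zero hv]
  refine ⟨fun h => le_antisymm (le_ciInf fun w => h w w.2) (ciInf_le hbdd ⟨v, hv⟩),
    fun h w hw => h ▸ ciInf_le hbdd ⟨w, hw⟩⟩

theorem LinearMap.forall_norm_sub_le_iff_real_inner_eq_zero [AddCommGroup E] [Module ℝ E]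
    (A : E →ₗ[ℝ] F) (b : F) (V : Submodule ℝ E) {u : E} (hu : u ∈ V) :
    (∀ z ∈ V, ‖b - A u‖ ≤ ‖b - A z‖) ↔ ∀ w ∈ V, ⟪b - A u, A w⟫ = 0 := by
  simpa only [Submodule.mem_map, forall_exists_index, and_imp, forall_apply_eq_imp_iff₂] using
    (V.map A).forall_norm_sub_le_iff_real_inner_eq_zero (Submodule.mem_map_of_mem hu)

end LeastSquares

section RieszLift

variable {Y : Type*} [NormedAddCommGroup Y] [InnerProductSpace ℝ Y] {Yδ : Submodule ℝ Y}

theorem Submodule.eq_of_forall_inner_eq {r₁ r₂ : Y} (h₁ : r₁ ∈ Yδ) (h₂ : r₂ ∈ Yδ)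
    (h : ∀ y ∈ Yδ, ⟪r₁, y⟫ = ⟪r₂, y⟫) : r₁ = r₂ :=
  congrArg Subtype.val <| ext_inner_right ℝ (E := Yδ) (x := ⟨r₁, h₁⟩) (y := ⟨r₂, h₂⟩)
    fun y => h y y.2

theorem iSup_abs_div_norm_eq_norm {g : Y → ℝ} {r : Y} (hr : r ∈ Yδ)
    (hg : ∀ y ∈ Yδ, g y = ⟪r, y⟫) :
    ⨆ y : Yδ, |g y| / ‖(y : Y)‖ = ‖r‖ := by
  have hle : ∀ y : Yδ, |g y| / ‖(y : Y)‖ ≤ ‖r‖ := by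
    intro y
    rcases eq_or_ne (y : Y) 0 with h0 | h0
    · simp [h0]
    · rw [div_le_iff₀ (norm_pos_iff.mpr h0), hg y y.2]
      exact abs_real_inner_le_norm _ _
  refine le_antisymm (ciSup_le hle) ?_
  rcases eq_or_ne r 0 with rfl | h0
  · exact norm_zero (E := Y) ▸ Real.iSup_nonneg fun y => by positivity
  · calc ‖r‖ = |g r| / ‖r‖ := by
          rw [hg r hr, real_inner_self_eq_norm_sq, abs_of_nonneg (sq_nonneg _), sq,
            mul_self_div_self]
      _ ≤ ⨆ y : Yδ, |g y| / ‖(y : Y)‖ :=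
          le_ciSup (f := fun y : Yδ => |g y| / ‖(y : Y)‖) ⟨‖r‖, Set.forall_mem_range.2 hle⟩
            ⟨r, hr⟩

theorem isLinearMap_of_riesz_lift {Rδ : (Y →L[ℝ] ℝ) → Y} (hRδmem : ∀ g, Rδ g ∈ Yδ)
    (hRδ : ∀ g : Y →L[ℝ] ℝ, ∀ y ∈ Yδ, g y = ⟪Rδ g, y⟫) : IsLinearMap ℝ Rδ where
  map_add g h := Submodule.eq_of_forall_inner_eq (hRδmem _)
    (Yδ.add_mem (hRδmem g) (hRδmem h)) fun y hy => by
      rw [← hRδ _ y hy, inner_add_left, ← hRδ g y hy, ← hRδ h y hy]; rfl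
  map_smul t g := Submodule.eq_of_forall_inner_eq (hRδmem _)
    (Yδ.smul_mem t (hRδmem g)) fun y hy => by
      rw [← hRδ _ y hy, real_inner_smul_left, ← hRδ g y hy]; rfl

end RieszLift

theorem stmt5_general
    {X Y : Type*}
    [NormedAddCommGroup X] [InnerProductSpace ℝ X]
    [NormedAddCommGroup Y] [InnerProductSpace ℝ Y]
    (G : X →L[ℝ] (Y →L[ℝ] ℝ)) (f : Y →L[ℝ] ℝ)
    (Xδ : Submodule ℝ X)
    (Yδ : Submodule ℝ Y)
    (Rδ : (Y →L[ℝ] ℝ) → Y)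
    (hRδmem : ∀ g : Y →L[ℝ] ℝ, Rδ g ∈ Yδ)
    (hRδ : ∀ g : Y →L[ℝ] ℝ, ∀ y ∈ Yδ, g y = ⟪Rδ g, y⟫)
    (uδ : X) (huδ : uδ ∈ Xδ) :
    (∀ z ∈ Xδ,
        (1/2 : ℝ) * (⨆ y : Yδ, |(G uδ - f) (y : Y)| / ‖(y : Y)‖) ^ 2 ≤
        (1/2 : ℝ) * (⨆ y : Yδ, |(G z - f) (y : Y)| / ‖(y : Y)‖) ^ 2) ↔
    (∀ w ∈ Xδ, (G uδ - f) (Rδ (G w)) = 0) := by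
  set R := IsLinearMap.mk' Rδ (isLinearMap_of_riesz_lift hRδmem hRδ)
  have hR : ∀ z, Rδ (G z - f) = -(Rδ f - R (G z)) := fun z => by
    rw [neg_sub]; exact map_sub R _ _
  have hsup : ∀ z, ⨆ y : Yδ, |(G z - f) (y : Y)| / ‖(y : Y)‖ = ‖Rδ f - R (G z)‖ := fun z => by
    rw [iSup_abs_div_norm_eq_norm (hRδmem _) (hRδ _), hR, norm_neg]
  have hPG : ∀ w, (G uδ - f) (Rδ (G w)) = -⟪Rδ f - R (G uδ), R (G w)⟫ := fun w => by
    rw [hRδ _ _ (hRδmem _), hR, inner_neg_left]; rfl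
  simp only [hsup, hPG, neg_eq_zero]
  refine Iff.trans ?_
    ((R ∘ₗ (G : X →ₗ[ℝ] Y →L[ℝ] ℝ)).forall_norm_sub_le_iff_real_inner_eq_zero (Rδ f) Xδ huδ)
  refine forall₂_congr fun z _ => ?_
  rw [mul_le_mul_iff_right₀ one_half_pos, sq_le_sq₀ (norm_nonneg _) (norm_nonneg _)]
  rfl

/-- Let `X`, `Y` be real Hilbert spaces, `G : X → Y'` bounded linear,
`f ∈ Y'`, and `Xδ ⊆ X`, `Yδ ⊆ Y` closed subspaces. Then `uδ ∈ Xδ` minimizes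
`z ↦ ½(sup_{0 ≠ y ∈ Yδ} |(Gz − f)(y)|/‖y‖)²` over `Xδ` iff it satisfies the
Petrov–Galerkin equations `(G uδ − f)(Rδ(Gw)) = 0` for all `w ∈ Xδ`, where `Rδ` is the
Riesz lift onto `Yδ`: `Rδ g ∈ Yδ` and `g(y) = ⟪Rδ g, y⟫` for all `y ∈ Yδ`. -/
theorem stmt5
    {X Y : Type*}
    [NormedAddCommGroup X] [InnerProductSpace ℝ X] [CompleteSpace X]
    [NormedAddCommGroup Y] [InnerProductSpace ℝ Y] [CompleteSpace Y]
    (G : X →L[ℝ] (Y →L[ℝ] ℝ)) (f : Y →L[ℝ] ℝ)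
    (Xδ : Submodule ℝ X) (hXδ : IsClosed (Xδ : Set X))
    (Yδ : Submodule ℝ Y) (hYδ : IsClosed (Yδ : Set Y))
    (Rδ : (Y →L[ℝ] ℝ) → Y)
    (hRδmem : ∀ g : Y →L[ℝ] ℝ, Rδ g ∈ Yδ)
    (hRδ : ∀ g : Y →L[ℝ] ℝ, ∀ y ∈ Yδ, g y = ⟪Rδ g, y⟫)
    (uδ : X) (huδ : uδ ∈ Xδ) :
    (∀ z ∈ Xδ,
        (1/2 : ℝ) * (⨆ y : Yδ, |(G uδ - f) (y : Y)| / ‖(y : Y)‖) ^ 2 ≤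
        (1/2 : ℝ) * (⨆ y : Yδ, |(G z - f) (y : Y)| / ‖(y : Y)‖) ^ 2) ↔
    (∀ w ∈ Xδ, (G uδ - f) (Rδ (G w)) = 0) :=
  stmt5_general G f Xδ Yδ Rδ hRδmem hRδ uδ huδ
end

section
/- Let X and Y be real Hilbert spaces, G : X → Y' a bounded linear map, and let X^δ ⊆ X and Y^δ ⊆ Y be closed linear subspaces. Then for every z ∈ X^δ, sup_{0 ≠ y ∈ Y^δ} |(Gz)(y)|/‖y‖_Y = sup_{0 ≠ y ∈ Z^δ} |(Gz)(y)|/‖y‖_Y, where Z^δ := {R^δ G w : w ∈ X^δ} ⊆ Y^δ. Consequently the inf-sup constant γ^δ := inf{ ‖Gz‖_{(Y^δ)'}/‖Gz‖_{Y'} : z ∈ X^δ, Gz ≠ 0 } does not change when Y^δ is replaced by Z^δ. -/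
open scoped RealInnerProductSpace

/-!
Both suprema are the dual norm of `Gz` computed over a subset of `Yδ` containing the Riesz
representer `Rδ(Gz)`. On `Yδ` the functional `Gz` is `⟪Rδ(Gz), ·⟫`, so by Cauchy–Schwarz
each quotient is at most `‖Rδ(Gz)‖`, and the representer itself attains this bound.
Since `Rδ(Gz)` lies in `Zδ ⊆ Yδ` for `z ∈ Xδ`, both suprema equal `‖Rδ(Gz)‖`.
-/

theorem iSup_abs_div_norm_eq_norm_of_eq_inner {E : Type*} [NormedAddCommGroup E]
    [InnerProductSpace ℝ E] (g : E → ℝ) {s : Set E} {v : E} (hv : v ∈ s)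
    (hg : ∀ y ∈ s, g y = ⟪v, y⟫) :
    ⨆ y : s, |g y| / ‖(y : E)‖ = ‖v‖ := by
  have hle : ∀ y : s, |g y| / ‖(y : E)‖ ≤ ‖v‖ := by
    rintro ⟨y, hy⟩
    rw [hg y hy]
    exact div_le_of_le_mul₀ (norm_nonneg _) (norm_nonneg _) (abs_real_inner_le_norm v y)
  have hattained : |g v| / ‖v‖ = ‖v‖ := by
    rcases eq_or_ne v 0 with rfl | hv0
    · simp
    · rw [hg v hv, real_inner_self_eq_norm_sq, abs_of_nonneg (sq_nonneg _), sq,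
        mul_div_cancel_right₀ _ (norm_ne_zero_iff.mpr hv0)]
  have : Nonempty s := ⟨⟨v, hv⟩⟩
  refine le_antisymm (ciSup_le hle) ?_
  calc ‖v‖ = |g v| / ‖v‖ := hattained.symm
    _ ≤ ⨆ y : s, |g y| / ‖(y : E)‖ :=
      le_ciSup (f := fun y : s => |g y| / ‖(y : E)‖) ⟨‖v‖, Set.forall_mem_range.mpr hle⟩ ⟨v, hv⟩

theorem stmt6_general
    {X Y : Type*}
    [NormedAddCommGroup X] [InnerProductSpace ℝ X]
    [NormedAddCommGroup Y] [InnerProductSpace ℝ Y]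
    (G : X →L[ℝ] (Y →L[ℝ] ℝ))
    (Xδ : Submodule ℝ X)
    (Yδ : Submodule ℝ Y)
    (Rδ : (Y →L[ℝ] ℝ) → Y)
    (hRδmem : ∀ g : Y →L[ℝ] ℝ, Rδ g ∈ Yδ)
    (hRδ : ∀ g : Y →L[ℝ] ℝ, ∀ y ∈ Yδ, g y = ⟪Rδ g, y⟫) :
    (∀ z ∈ Xδ,
        (⨆ y : Yδ, |G z (y : Y)| / ‖(y : Y)‖) =
        ⨆ y : ((fun w => Rδ (G w)) '' (Xδ : Set X)), |G z (y : Y)| / ‖(y : Y)‖)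
    ∧ (⨅ z : {z : X // z ∈ Xδ ∧ G z ≠ 0},
          (⨆ y : Yδ, |G (z : X) (y : Y)| / ‖(y : Y)‖) / ‖G (z : X)‖) =
      (⨅ z : {z : X // z ∈ Xδ ∧ G z ≠ 0},
          (⨆ y : ((fun w => Rδ (G w)) '' (Xδ : Set X)),
            |G (z : X) (y : Y)| / ‖(y : Y)‖) / ‖G (z : X)‖) := by
  have hZδ : (fun w => Rδ (G w)) '' (Xδ : Set X) ⊆ Yδ := by
    rintro _ ⟨w, -, rfl⟩
    exact hRδmem _
  have sup_eq : ∀ z ∈ Xδ,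
      (⨆ y : Yδ, |G z (y : Y)| / ‖(y : Y)‖) =
      ⨆ y : ((fun w => Rδ (G w)) '' (Xδ : Set X)), |G z (y : Y)| / ‖(y : Y)‖ := fun z hz =>
    (iSup_abs_div_norm_eq_norm_of_eq_inner (G z) (s := Yδ) (hRδmem _) (hRδ _)).trans
      (iSup_abs_div_norm_eq_norm_of_eq_inner (G z) (Set.mem_image_of_mem _ hz)
        fun y hy => hRδ _ y (hZδ hy)).symm
  exact ⟨sup_eq, iInf_congr fun z => by rw [sup_eq z z.2.1]⟩

/-- With `Rδ` the Riesz lift onto the closed subspace `Yδ` of the real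
Hilbert space `Y`, for every `z ∈ Xδ` the discretized dual norm of `Gz` over `Yδ` equals
the one over `Zδ := {Rδ(Gw) : w ∈ Xδ}`; consequently the inf-sup constant
`γδ = inf{‖Gz‖_{(Yδ)'}/‖Gz‖_{Y'} : z ∈ Xδ, Gz ≠ 0}` is unchanged when `Yδ` is replaced
by `Zδ`. -/
theorem stmt6
    {X Y : Type*}
    [NormedAddCommGroup X] [InnerProductSpace ℝ X] [CompleteSpace X]
    [NormedAddCommGroup Y] [InnerProductSpace ℝ Y] [CompleteSpace Y]
    (G : X →L[ℝ] (Y →L[ℝ] ℝ))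
    (Xδ : Submodule ℝ X) (hXδ : IsClosed (Xδ : Set X))
    (Yδ : Submodule ℝ Y) (hYδ : IsClosed (Yδ : Set Y))
    (Rδ : (Y →L[ℝ] ℝ) → Y)
    (hRδmem : ∀ g : Y →L[ℝ] ℝ, Rδ g ∈ Yδ)
    (hRδ : ∀ g : Y →L[ℝ] ℝ, ∀ y ∈ Yδ, g y = ⟪Rδ g, y⟫) :
    (∀ z ∈ Xδ,
        (⨆ y : Yδ, |G z (y : Y)| / ‖(y : Y)‖) =
        ⨆ y : ((fun w => Rδ (G w)) '' (Xδ : Set X)), |G z (y : Y)| / ‖(y : Y)‖)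
    ∧ (⨅ z : {z : X // z ∈ Xδ ∧ G z ≠ 0},
          (⨆ y : Yδ, |G (z : X) (y : Y)| / ‖(y : Y)‖) / ‖G (z : X)‖) =
      (⨅ z : {z : X // z ∈ Xδ ∧ G z ≠ 0},
          (⨆ y : ((fun w => Rδ (G w)) '' (Xδ : Set X)),
            |G (z : X) (y : Y)| / ‖(y : Y)‖) / ‖G (z : X)‖) :=
  stmt6_general G Xδ Yδ Rδ hRδmem hRδ
end

section
/- Let X and Y be real Hilbert spaces, G ∈ Lis(X,Y'), and let X^δ ⊆ X and Y^δ ⊆ Y be closed linear subspaces with {0} ⊊ X^δ ⊊ X. Assume the inf-sup constant γ^δ := inf{ ‖Gz‖_{(Y^δ)'}/‖Gz‖_{Y'} : z ∈ X^δ, Gz ≠ 0 } is strictly positive. Define the norm |||x||| := ‖Gx‖_{Y'} on X, and for u ∈ X let S^δ u ∈ X^δ denote the unique minimizer over X^δ of z ↦ sup_{0 ≠ y ∈ Y^δ} |(G(z − u))(y)|/‖y‖_Y. Then inf_{u ∈ X \ X^δ} [ inf_{w ∈ X^δ} |||u − w||| / |||u − S^δ u||| ] = γ^δ. -/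
/-!
Transport everything to `Y` through `φ = R⁻¹ ∘ G`, with `R : Y ≃ Y'` the Riesz map: then
`|||x||| = ‖φ x‖` and the discrete dual norm of `G x` is `‖P (φ x)‖`, where `P` is the orthogonal
projection onto `Yδ`. Minimality of `Sδ u` is Galerkin orthogonality
`P (φ u - φ (Sδ u)) ⊥ P (φ Xδ)`, so for `w ∈ Xδ` the errors `e = φ (u - Sδ u)` and
`v = φ (w - Sδ u)` interact only through their `Yδᗮ`-parts; since `‖(1 - P) v‖² ≤ (1 - γ²) ‖v‖²`,
this gives `‖e - v‖ ≥ γ ‖e‖`. Conversely, for `z ∈ Xδ` let `φ u = (1 - P) φ z`. Then `Sδ u = 0`,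
while the distance from `φ u` to the line through `φ z` is `‖P φ z‖ / ‖φ z‖ · ‖φ u‖`, so the
ratio at `u` is at most `‖P φ z‖ / ‖φ z‖`.
-/

open InnerProductSpace

theorem sq_mul_sq_le_of_sq_add_sq_mul_sq_le {B s γ : ℝ} (A : ℝ) (hγ : γ ^ 2 ≤ 1)
    (h : s ^ 2 + γ ^ 2 * B ^ 2 ≤ B ^ 2) : γ ^ 2 * A ^ 2 ≤ A ^ 2 - 2 * A * s + B ^ 2 := by
  rcases eq_or_lt_of_le (sq_nonneg B) with hB | hB
  · obtain rfl : s = 0 := by nlinarith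
    nlinarith
  · refine le_of_mul_le_mul_left ?_ hB
    -- `B² (rhs - lhs) = (s A - B²)² + A² (B² - γ² B² - s²)`
    nlinarith [sq_nonneg (s * A - B ^ 2), mul_nonneg (sq_nonneg A) (sub_nonneg.2 h)]

section

variable {E : Type*} [NormedAddCommGroup E] [InnerProductSpace ℝ E]

namespace Submodule

variable (K : Submodule ℝ E)

theorem iSup_abs_inner_div_norm_eq_norm {p : E} (hp : p ∈ K) :
    ⨆ y : K, |⟪p, (y : E)⟫_ℝ| / ‖(y : E)‖ = ‖p‖ := by
  have hle (y : K) : |⟪p, (y : E)⟫_ℝ| / ‖(y : E)‖ ≤ ‖p‖ :=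
    div_le_of_le_mul₀ (norm_nonneg _) (norm_nonneg _) (abs_real_inner_le_norm _ _)
  refine le_antisymm (ciSup_le hle) ?_
  calc ‖p‖ = |⟪p, p⟫_ℝ| / ‖p‖ := by
        rw [real_inner_self_eq_norm_sq, abs_of_nonneg (by positivity), pow_two,
          mul_self_div_self]
    _ ≤ _ := le_ciSup ⟨‖p‖, Set.forall_mem_range.2 hle⟩ (⟨p, hp⟩ : K)

variable [K.HasOrthogonalProjection]

theorem iSup_abs_apply_div_norm_eq_norm_starProjection [CompleteSpace E]
    (f : StrongDual ℝ E) :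
    ⨆ y : K, |f y| / ‖(y : E)‖ = ‖K.starProjection ((toDual ℝ E).symm f)‖ := by
  have hf (y : K) : f y = ⟪K.starProjection ((toDual ℝ E).symm f), (y : E)⟫_ℝ := by
    rw [inner_starProjection_left_eq_right, starProjection_mem_subspace_eq_self,
      toDual_symm_apply]
  simp only [hf]
  exact K.iSup_abs_inner_div_norm_eq_norm (K.starProjection_apply_mem _)

theorem inner_eq_inner_starProjection_add_inner_starProjection_orthogonal (x y : E) :
    ⟪x, y⟫_ℝ = ⟪K.starProjection x, K.starProjection y⟫_ℝ +
      ⟪Kᗮ.starProjection x, Kᗮ.starProjection y⟫_ℝ := by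
  have h₁ := K.inner_right_of_mem_orthogonal (K.starProjection_apply_mem x)
    (Kᗮ.starProjection_apply_mem y)
  have h₂ := K.inner_left_of_mem_orthogonal (K.starProjection_apply_mem y)
    (Kᗮ.starProjection_apply_mem x)
  conv_lhs => rw [← K.starProjection_add_starProjection_orthogonal x,
    ← K.starProjection_add_starProjection_orthogonal y]
  simp only [inner_add_left, inner_add_right, h₁, h₂]
  ring

theorem norm_starProjection_orthogonal_sub_smul_mul_norm (v : E) :
    ‖Kᗮ.starProjection v - (‖Kᗮ.starProjection v‖ ^ 2 / ‖v‖ ^ 2) • v‖ * ‖v‖ =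
      ‖K.starProjection v‖ * ‖Kᗮ.starProjection v‖ := by
  set p := K.starProjection v
  set e := Kᗮ.starProjection v
  rcases eq_or_ne v 0 with rfl | hv
  · simp [e]
  have hpe : ⟪p, e⟫_ℝ = 0 := K.inner_right_of_mem_orthogonal (K.starProjection_apply_mem v)
    (Kᗮ.starProjection_apply_mem v)
  have hnorm : ‖v‖ ^ 2 = ‖p‖ ^ 2 + ‖e‖ ^ 2 := K.norm_sq_eq_add_norm_sq_starProjection v
  have hv2 : ‖v‖ ^ 2 ≠ 0 := by positivity
  set c := ‖e‖ ^ 2 / ‖v‖ ^ 2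
  have hdecomp : e - c • v = (1 - c) • e - c • p := by
    rw [← K.starProjection_add_starProjection_orthogonal v]
    module
  have hsq : ‖e - c • v‖ ^ 2 * ‖v‖ ^ 2 = (‖p‖ * ‖e‖) ^ 2 := by
    rw [hdecomp, norm_sub_sq_real, real_inner_smul_left, real_inner_smul_right,
      real_inner_comm, hpe, norm_smul, norm_smul, Real.norm_eq_abs, Real.norm_eq_abs]
    simp only [c, mul_pow, sq_abs]
    field_simp
    rw [hnorm]
    ring
  rw [← pow_left_inj₀ (by positivity) (by positivity) two_ne_zero, mul_pow, hsq]

variable {X : Type*} [AddCommGroup X] [Module ℝ X] {Xδ : Submodule ℝ X}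

theorem inner_starProjection_eq_zero_of_isMinOn (φ : X →ₗ[ℝ] E) {e : E} {s : X} (hs : s ∈ Xδ)
    (hmin : IsMinOn (fun z => ‖K.starProjection (φ z - e)‖) Xδ s) {z : X} (hz : z ∈ Xδ) :
    ⟪K.starProjection (φ s - e), K.starProjection (φ z)⟫_ℝ = 0 := by
  let W := Xδ.map ((K.starProjection : E →ₗ[ℝ] E) ∘ₗ φ)
  have hbest : ‖K.starProjection e - K.starProjection (φ s)‖ =
      ⨅ w : (W : Set E), ‖K.starProjection e - w‖ := by
    refine le_antisymm (le_ciInf ?_) (ciInf_le ⟨0, Set.forall_mem_range.2 fun _ => norm_nonneg _⟩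
      (⟨_, Xδ.mem_map_of_mem hs⟩ : (W : Set E)))
    rintro ⟨_, z, hz, rfl⟩
    simp only [LinearMap.comp_apply, ContinuousLinearMap.coe_coe, ← map_sub]
    rw [← neg_sub (φ s), ← neg_sub (φ z), map_neg, map_neg, norm_neg, norm_neg]
    exact isMinOn_iff.1 hmin z hz
  have := (norm_eq_iInf_iff_real_inner_eq_zero W (Xδ.mem_map_of_mem hs)).1 hbest _
    (Xδ.mem_map_of_mem hz)
  simp only [LinearMap.comp_apply, ContinuousLinearMap.coe_coe] at this
  rw [map_sub, ← neg_sub, inner_neg_left, this, neg_zero]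

theorem mul_norm_sub_le_of_isMinOn (φ : X →ₗ[ℝ] E) {γ : ℝ} (hγ₀ : 0 ≤ γ) (hγ₁ : γ ≤ 1)
    (hγ : ∀ z ∈ Xδ, γ * ‖φ z‖ ≤ ‖K.starProjection (φ z)‖) {e : E} {s : X} (hs : s ∈ Xδ)
    (hmin : IsMinOn (fun z => ‖K.starProjection (φ z - e)‖) Xδ s) {w : X} (hw : w ∈ Xδ) :
    γ * ‖e - φ s‖ ≤ ‖e - φ w‖ := by
  have hws : w - s ∈ Xδ := Xδ.sub_mem hw hs
  set ε := e - φ s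
  set v := φ (w - s)
  have hew : e - φ w = ε - v := by simp only [ε, v, map_sub]; abel
  have horth : ⟪K.starProjection ε, K.starProjection v⟫_ℝ = 0 := by
    rw [show ε = -(φ s - e) from (neg_sub _ _).symm, map_neg, inner_neg_left,
      K.inner_starProjection_eq_zero_of_isMinOn φ hs hmin hws, neg_zero]
  have hinner : ⟪ε, v⟫_ℝ ≤ ‖ε‖ * ‖Kᗮ.starProjection v‖ := by
    rw [K.inner_eq_inner_starProjection_add_inner_starProjection_orthogonal, horth, zero_add]
    exact (real_inner_le_norm _ _).trans
      (mul_le_mul_of_nonneg_right (Kᗮ.norm_starProjection_apply_le ε) (norm_nonneg _))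
  have hsplit : ‖Kᗮ.starProjection v‖ ^ 2 + γ ^ 2 * ‖v‖ ^ 2 ≤ ‖v‖ ^ 2 := by
    have hγv := pow_le_pow_left₀ (by positivity) (hγ _ hws) 2
    rw [mul_pow] at hγv
    linarith [K.norm_sq_eq_add_norm_sq_starProjection v]
  have key := sq_mul_sq_le_of_sq_add_sq_mul_sq_le ‖ε‖ (by nlinarith) hsplit
  rw [hew, ← pow_le_pow_iff_left₀ (by positivity) (norm_nonneg _) two_ne_zero,
    norm_sub_sq_real, mul_pow]
  linarith

theorem eq_zero_of_isMinOn_of_starProjection_eq_zero (φ : X →ₗ[ℝ] E) {γ : ℝ} (hγ₀ : 0 < γ)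
    (hγ : ∀ z ∈ Xδ, γ * ‖φ z‖ ≤ ‖K.starProjection (φ z)‖) {e : E} (he : K.starProjection e = 0)
    {s : X} (hs : s ∈ Xδ) (hmin : IsMinOn (fun z => ‖K.starProjection (φ z - e)‖) Xδ s) :
    φ s = 0 := by
  have hPs : K.starProjection (φ s) = 0 := by
    simpa [he] using isMinOn_iff.1 hmin 0 Xδ.zero_mem
  have := hγ s hs
  rw [hPs, norm_zero] at this
  exact norm_le_zero_iff.1 (nonpos_of_mul_nonpos_right this hγ₀)

end Submodule

variable {X : Type*} [AddCommGroup X] [Module ℝ X]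

noncomputable def bestApproxRatio (φ : X →ₗ[ℝ] E) (Xδ : Submodule ℝ X) (S : X → X) (u : X) :
    ℝ :=
  (⨅ w : Xδ, ‖φ u - φ w‖) / ‖φ u - φ (S u)‖

noncomputable def infSupConst (K : Submodule ℝ E) [K.HasOrthogonalProjection] (φ : X →ₗ[ℝ] E)
    (Xδ : Submodule ℝ X) : ℝ :=
  ⨅ z : {z // z ∈ Xδ ∧ z ≠ 0}, ‖K.starProjection (φ z)‖ / ‖φ z‖

variable {Xδ : Submodule ℝ X}

section bestApproxRatio

variable {φ : X →ₗ[ℝ] E} {S : X → X}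

theorem bddBelow_range_norm_sub (u : X) : BddBelow (Set.range fun w : Xδ => ‖φ u - φ w‖) :=
  ⟨0, Set.forall_mem_range.2 fun _ => norm_nonneg _⟩

theorem bestApproxRatio_nonneg (u : X) : 0 ≤ bestApproxRatio φ Xδ S u :=
  div_nonneg (Real.iInf_nonneg fun _ => norm_nonneg _) (norm_nonneg _)

theorem bestApproxRatio_le_one {u : X} (hS : S u ∈ Xδ) : bestApproxRatio φ Xδ S u ≤ 1 :=
  div_le_one_of_le₀ (ciInf_le (bddBelow_range_norm_sub u) (⟨S u, hS⟩ : Xδ)) (norm_nonneg _)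

theorem bddBelow_range_bestApproxRatio :
    BddBelow (Set.range fun u : {u // u ∉ Xδ} => bestApproxRatio φ Xδ S u) :=
  ⟨0, Set.forall_mem_range.2 fun _ => bestApproxRatio_nonneg _⟩

end bestApproxRatio

variable {K : Submodule ℝ E} [K.HasOrthogonalProjection]

section infSupConst

variable {φ : X →ₗ[ℝ] E}

theorem bddBelow_range_norm_starProjection_div_norm :
    BddBelow (Set.range fun z : {z // z ∈ Xδ ∧ z ≠ 0} => ‖K.starProjection (φ z)‖ / ‖φ z‖) :=
  ⟨0, Set.forall_mem_range.2 fun _ => by positivity⟩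

theorem infSupConst_mul_norm_le {z : X} (hz : z ∈ Xδ) :
    infSupConst K φ Xδ * ‖φ z‖ ≤ ‖K.starProjection (φ z)‖ := by
  rcases eq_or_ne (φ z) 0 with hφz | hφz
  · simp [hφz]
  have hz₀ : z ≠ 0 := fun h => hφz (h ▸ map_zero φ)
  exact (le_div_iff₀ (norm_pos_iff.2 hφz)).1
    (ciInf_le bddBelow_range_norm_starProjection_div_norm ⟨z, hz, hz₀⟩)

theorem infSupConst_le_one (hXδ : Xδ ≠ ⊥) : infSupConst K φ Xδ ≤ 1 := by
  obtain ⟨z, hz, hz₀⟩ := Submodule.exists_mem_ne_zero_of_ne_bot hXδ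
  exact (ciInf_le bddBelow_range_norm_starProjection_div_norm ⟨z, hz, hz₀⟩).trans
    (div_le_one_of_le₀ (K.norm_starProjection_apply_le _) (norm_nonneg _))

end infSupConst

section iInf_bestApproxRatio

variable (φ : X ≃ₗ[ℝ] E) {S : X → X}

theorem le_iInf_bestApproxRatio (hS : ∀ u, S u ∈ Xδ)
    (hmin : ∀ u, IsMinOn (fun z => ‖K.starProjection (φ z - φ u)‖) Xδ (S u))
    {γ : ℝ} (hγ₀ : 0 ≤ γ) (hγ₁ : γ ≤ 1)
    (hγ : ∀ z ∈ Xδ, γ * ‖φ z‖ ≤ ‖K.starProjection (φ z)‖) (hXδ : Xδ ≠ ⊤) :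
    γ ≤ ⨅ u : {u // u ∉ Xδ}, bestApproxRatio (φ : X →ₗ[ℝ] E) Xδ S u := by
  have : Nonempty {u // u ∉ Xδ} := nonempty_subtype.2 (SetLike.exists_not_mem_of_ne_top Xδ hXδ)
  refine le_ciInf fun ⟨u, hu⟩ => ?_
  have hSu : φ u - φ (S u) ≠ 0 :=
    sub_ne_zero.2 (φ.injective.ne (ne_of_mem_of_not_mem (hS u) hu).symm)
  simp only [bestApproxRatio, LinearEquiv.coe_coe]
  rw [le_div_iff₀ (norm_pos_iff.2 hSu)]
  exact le_ciInf fun w =>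
    K.mul_norm_sub_le_of_isMinOn (φ : X →ₗ[ℝ] E) hγ₀ hγ₁ hγ (hS u) (hmin u) w.2

theorem iInf_bestApproxRatio_le (hS : ∀ u, S u ∈ Xδ)
    (hmin : ∀ u, IsMinOn (fun z => ‖K.starProjection (φ z - φ u)‖) Xδ (S u))
    {γ : ℝ} (hγ₀ : 0 < γ)
    (hγ : ∀ z ∈ Xδ, γ * ‖φ z‖ ≤ ‖K.starProjection (φ z)‖) (hXδ : Xδ ≠ ⊤)
    {z : X} (hz : z ∈ Xδ) (hz₀ : z ≠ 0) :
    ⨅ u : {u // u ∉ Xδ}, bestApproxRatio (φ : X →ₗ[ℝ] E) Xδ S u ≤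
      ‖K.starProjection (φ z)‖ / ‖φ z‖ := by
  have : Nonempty {u // u ∉ Xδ} := nonempty_subtype.2 (SetLike.exists_not_mem_of_ne_top Xδ hXδ)
  have hv : ‖φ z‖ ≠ 0 := norm_ne_zero_iff.2 (φ.map_ne_zero_iff.2 hz₀)
  set e := Kᗮ.starProjection (φ z)
  by_cases he : e = 0
  · have hPv : K.starProjection (φ z) = φ z := by
      rw [eq_comm, ← sub_eq_zero, ← Submodule.starProjection_orthogonal_val]
      exact he
    obtain ⟨u⟩ := this
    rw [hPv, div_self hv]
    exact (ciInf_le bddBelow_range_bestApproxRatio u).trans (bestApproxRatio_le_one (hS u))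
  set u := φ.symm e
  have hφu : φ u = e := φ.apply_symm_apply e
  have hPe : K.starProjection e = 0 :=
    K.starProjection_apply_eq_zero_iff.2 (Kᗮ.starProjection_apply_mem _)
  have hu : u ∉ Xδ := fun hu => he <| norm_le_zero_iff.1 <|
    nonpos_of_mul_nonpos_right (by simpa [hφu, hPe] using hγ u hu) hγ₀
  have hSu : φ (S u) = 0 := by
    rw [← hφu] at hPe
    exact K.eq_zero_of_isMinOn_of_starProjection_eq_zero _ hγ₀ hγ hPe (hS u) (hmin u)
  -- `c • φ z` is the orthogonal projection of `e` onto the line through `φ z`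
  set c := ‖e‖ ^ 2 / ‖φ z‖ ^ 2
  refine (ciInf_le bddBelow_range_bestApproxRatio ⟨u, hu⟩).trans ?_
  calc bestApproxRatio (φ : X →ₗ[ℝ] E) Xδ S u ≤ ‖e - c • φ z‖ / ‖e‖ := by
        simp only [bestApproxRatio, LinearEquiv.coe_coe, hφu, hSu, sub_zero]
        gcongr
        simpa only [LinearEquiv.coe_coe, hφu, map_smul] using
          ciInf_le (bddBelow_range_norm_sub (φ := (φ : X →ₗ[ℝ] E)) u) ⟨c • z, Xδ.smul_mem c hz⟩
    _ = ‖K.starProjection (φ z)‖ / ‖φ z‖ := by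
        rw [div_eq_div_iff (norm_ne_zero_iff.2 he) hv]
        exact K.norm_starProjection_orthogonal_sub_smul_mul_norm (φ z)

theorem iInf_bestApproxRatio_eq_infSupConst (hS : ∀ u, S u ∈ Xδ)
    (hmin : ∀ u, IsMinOn (fun z => ‖K.starProjection (φ z - φ u)‖) Xδ (S u))
    (hXδbot : Xδ ≠ ⊥) (hXδtop : Xδ ≠ ⊤)
    (hpos : 0 < infSupConst K (φ : X →ₗ[ℝ] E) Xδ) :
    ⨅ u : {u // u ∉ Xδ}, bestApproxRatio (φ : X →ₗ[ℝ] E) Xδ S u =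
      infSupConst K (φ : X →ₗ[ℝ] E) Xδ := by
  have hγ (z : X) (hz : z ∈ Xδ) := infSupConst_mul_norm_le (K := K) (φ := (φ : X →ₗ[ℝ] E)) hz
  have : Nonempty {z // z ∈ Xδ ∧ z ≠ 0} :=
    nonempty_subtype.2 (Submodule.exists_mem_ne_zero_of_ne_bot hXδbot)
  exact le_antisymm
    (le_ciInf fun z => iInf_bestApproxRatio_le φ hS hmin hpos hγ hXδtop z.2.1 z.2.2)
    (le_iInf_bestApproxRatio φ hS hmin hpos.le (infSupConst_le_one hXδbot) hγ hXδtop)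

end iInf_bestApproxRatio

end

theorem stmt8_general
    {X Y : Type*}
    [NormedAddCommGroup X] [InnerProductSpace ℝ X]
    [NormedAddCommGroup Y] [InnerProductSpace ℝ Y] [CompleteSpace Y]
    (G : X ≃L[ℝ] (Y →L[ℝ] ℝ))
    (Xδ : Submodule ℝ X)
    (hXδbot : Xδ ≠ ⊥) (hXδtop : Xδ ≠ ⊤)
    (Yδ : Submodule ℝ Y) (hYδ : IsClosed (Yδ : Set Y))
    (γδ : ℝ)
    (hγδ : γδ = ⨅ z : {z : X // z ∈ Xδ ∧ G z ≠ 0},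
        (⨆ y : Yδ, |G (z : X) (y : Y)| / ‖(y : Y)‖) / ‖G (z : X)‖)
    (hγδpos : 0 < γδ)
    (Sδ : X → X)
    (hSδmem : ∀ u : X, Sδ u ∈ Xδ)
    (hSδmin : ∀ u : X, ∀ z ∈ Xδ,
        (⨆ y : Yδ, |(G (Sδ u) - G u) (y : Y)| / ‖(y : Y)‖) ≤
        (⨆ y : Yδ, |(G z - G u) (y : Y)| / ‖(y : Y)‖)) :
    (⨅ u : {u : X // u ∉ Xδ},
        (⨅ w : Xδ, ‖G (u : X) - G (w : X)‖) / ‖G (u : X) - G (Sδ (u : X))‖) = γδ := by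
  have : CompleteSpace Yδ := hYδ.completeSpace_coe
  let φ : X ≃L[ℝ] Y := G.trans (toDual ℝ Y).symm.toContinuousLinearEquiv
  have hnorm (x : X) : ‖G x‖ = ‖φ x‖ := ((toDual ℝ Y).symm.norm_map (G x)).symm
  have hsup (x : X) : ⨆ y : Yδ, |G x y| / ‖(y : Y)‖ = ‖Yδ.starProjection (φ x)‖ :=
    Yδ.iSup_abs_apply_div_norm_eq_norm_starProjection (G x)
  have hmin (u : X) : IsMinOn (fun z => ‖Yδ.starProjection (φ z - φ u)‖) Xδ (Sδ u) :=
    isMinOn_iff.2 fun z hz => by simpa only [← map_sub, hsup] using hSδmin u z hz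
  have hγ : γδ = infSupConst Yδ (φ.toLinearEquiv : X →ₗ[ℝ] Y) Xδ := by
    rw [hγδ]
    simp only [hsup, hnorm]
    exact (Equiv.subtypeEquivRight fun z =>
      and_congr_right fun _ => G.map_ne_zero_iff.symm).iInf_comp.symm
  have hnorm_sub (a b : X) : ‖G a - G b‖ = ‖φ a - φ b‖ := by rw [← map_sub, hnorm, map_sub]
  simp only [hnorm_sub]
  rw [hγ] at hγδpos ⊢
  exact iInf_bestApproxRatio_eq_infSupConst φ.toLinearEquiv hSδmem hmin hXδbot hXδtop hγδpos

/-- Let `X`, `Y` be real Hilbert spaces, `G ∈ Lis(X,Y')`, and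
`{0} ⊊ Xδ ⊊ X`, `Yδ ⊆ Y` closed subspaces with inf-sup constant `γδ > 0`. With
`|||x||| := ‖Gx‖_{Y'}` and `Sδ u` the (unique) minimizer over `Xδ` of
`z ↦ sup_{0 ≠ y ∈ Yδ} |(G(z − u))(y)|/‖y‖`, one has
`inf_{u ∈ X \ Xδ} [inf_{w ∈ Xδ} |||u − w||| / |||u − Sδ u|||] = γδ`. -/
theorem stmt8
    {X Y : Type*}
    [NormedAddCommGroup X] [InnerProductSpace ℝ X] [CompleteSpace X]
    [NormedAddCommGroup Y] [InnerProductSpace ℝ Y] [CompleteSpace Y]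
    (G : X ≃L[ℝ] (Y →L[ℝ] ℝ))
    (Xδ : Submodule ℝ X) (hXδ : IsClosed (Xδ : Set X))
    (hXδbot : Xδ ≠ ⊥) (hXδtop : Xδ ≠ ⊤)
    (Yδ : Submodule ℝ Y) (hYδ : IsClosed (Yδ : Set Y))
    (γδ : ℝ)
    (hγδ : γδ = ⨅ z : {z : X // z ∈ Xδ ∧ G z ≠ 0},
        (⨆ y : Yδ, |G (z : X) (y : Y)| / ‖(y : Y)‖) / ‖G (z : X)‖)
    (hγδpos : 0 < γδ)
    (Sδ : X → X)
    (hSδmem : ∀ u : X, Sδ u ∈ Xδ)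
    (hSδmin : ∀ u : X, ∀ z ∈ Xδ,
        (⨆ y : Yδ, |(G (Sδ u) - G u) (y : Y)| / ‖(y : Y)‖) ≤
        (⨆ y : Yδ, |(G z - G u) (y : Y)| / ‖(y : Y)‖)) :
    (⨅ u : {u : X // u ∉ Xδ},
        (⨅ w : Xδ, ‖G (u : X) - G (w : X)‖) / ‖G (u : X) - G (Sδ (u : X))‖) = γδ :=
  stmt8_general G Xδ hXδbot hXδtop Yδ hYδ γδ hγδ hγδpos Sδ hSδmem hSδmin
end

section
/- Let X and Y be real Hilbert spaces, G ∈ Lis(X,Y'), and let X^δ ⊆ X and Y^δ ⊆ Y be closed linear subspaces with inf-sup constant γ^δ := inf{ ‖Gz‖_{(Y^δ)'}/‖Gz‖_{Y'} : z ∈ X^δ, Gz ≠ 0 } strictly positive. Let ⟨·,·⟩_δ be another inner product on Y^δ whose norm ‖·‖_δ satisfies m·‖y‖_δ² ≤ ‖y‖_Y² ≤ M·‖y‖_δ² for all y ∈ Y^δ, for constants 0 < m ≤ M. Then for every f ∈ Y' there exists a unique u^δ ∈ X^δ minimizing z ↦ sup_{0 ≠ y ∈ Y^δ} |(Gz − f)(y)|/‖y‖_δ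 over X^δ, and with u := G⁻¹f it satisfies ‖G(u − u^δ)‖_{Y'} ≤ (√M / (γ^δ √m)) · inf_{w ∈ X^δ} ‖G(u − w)‖_{Y'}, and consequently ‖u − u^δ‖_X ≤ √(M/m) · (‖G‖_{L(X,Y')} ‖G⁻¹‖_{L(Y',X)} / γ^δ) · inf_{w ∈ X^δ} ‖u − w‖_X. -/
/-!
Identify `Y'` with `Y` by the Riesz map and let `H` be `Yδ` with the inner product `ip`; write
`P : H → Y` for the inclusion, so `‖P‖ ≤ √M`. The objective at `z` is then `‖Ψ (G z - f)‖_H` with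
`Ψ = P† ∘ Riesz`, and the inf-sup condition together with `m ‖y‖_δ² ≤ ‖y‖²` says that `Ψ` is
bounded below by `γδ √m` on `G Xδ`. Hence `uδ` is the solution of a least-squares problem in `H`
over a complete subspace: it exists, is unique, and is characterised by the Galerkin orthogonality
`Ψ (f - G uδ) ⊥ Ψ (G Xδ)`. This makes `f ↦ G uδ` an idempotent of norm at most
`√M / (γδ √m)` on the Hilbert space `Y'`, and Kato's identity `‖1 - Q‖ = ‖Q‖` for nontrivial
idempotents bounds `f - G uδ = (1 - Q) (f - G w)` by the same constant times `‖f - G w‖`.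
Applying `G⁻¹` and `G` gives the bound in `X`.
-/

open InnerProductSpace
open scoped RealInnerProductSpace

theorem ContinuousLinearMap.opNorm_eq_iSup_norm_apply_div {𝕜 E F : Type*}
    [NontriviallyNormedField 𝕜] [NormedAddCommGroup E] [NormedSpace 𝕜 E]
    [SeminormedAddCommGroup F] [NormedSpace 𝕜 F] (T : E →L[𝕜] F) :
    ‖T‖ = ⨆ x, ‖T x‖ / ‖x‖ := by
  have hle : ∀ x, ‖T x‖ / ‖x‖ ≤ ‖T‖ := fun x => T.ratio_le_opNorm x
  refine le_antisymm (T.opNorm_le_bound (Real.iSup_nonneg fun x => by positivity) fun x => ?_)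
    (ciSup_le hle)
  rcases eq_or_ne x 0 with rfl | hx
  · simp
  · rw [← div_le_iff₀ (norm_pos_iff.2 hx)]
    exact le_ciSup ⟨‖T‖, Set.forall_mem_range.2 hle⟩ x

theorem ContinuousLinearEquiv.norm_le_norm_symm_mul_norm_apply {𝕜 E F : Type*}
    [NontriviallyNormedField 𝕜] [NormedAddCommGroup E] [NormedSpace 𝕜 E]
    [NormedAddCommGroup F] [NormedSpace 𝕜 F] (G : E ≃L[𝕜] F) (x : E) :
    ‖x‖ ≤ ‖(G.symm : F →L[𝕜] E)‖ * ‖G x‖ := by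
  simpa using (G.symm : F →L[𝕜] E).le_opNorm (G x)

theorem ContinuousLinearEquiv.norm_le_of_norm_apply_le {𝕜 E F : Type*}
    [NontriviallyNormedField 𝕜] [NormedAddCommGroup E] [NormedSpace 𝕜 E]
    [NormedAddCommGroup F] [NormedSpace 𝕜 F] (G : E ≃L[𝕜] F) {x y : E} {C : ℝ} (hC : 0 ≤ C)
    (h : ‖G x‖ ≤ C * ‖G y‖) :
    ‖x‖ ≤ ‖(G.symm : F →L[𝕜] E)‖ * C * ‖(G : E →L[𝕜] F)‖ * ‖y‖ :=
  calc ‖x‖ ≤ ‖(G.symm : F →L[𝕜] E)‖ * ‖G x‖ := G.norm_le_norm_symm_mul_norm_apply x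
    _ ≤ ‖(G.symm : F →L[𝕜] E)‖ * (C * (‖(G : E →L[𝕜] F)‖ * ‖y‖)) := by
        gcongr
        exact h.trans (by gcongr; exact (G : E →L[𝕜] F).le_opNorm y)
    _ = _ := by ring

theorem Real.nonempty_of_iInf_pos {ι : Sort*} {f : ι → ℝ} (h : 0 < ⨅ i, f i) : Nonempty ι := by
  by_contra hι
  rw [not_nonempty_iff] at hι
  simp at h

/-- Kato's bound `‖1 - Q‖ ≤ ‖Q‖` for an idempotent `Q`, in terms of `p = Q y` and `q = y - Q y`:
`Q (p - c • q) = p`, so `‖Q‖ ≤ C` gives the hypothesis. -/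
theorem norm_le_mul_norm_add_of_forall_norm_le_mul_norm_sub_smul {E : Type*}
    [NormedAddCommGroup E] [InnerProductSpace ℝ E] {C : ℝ} (hC : 1 ≤ C) {p q : E}
    (h : ∀ c : ℝ, ‖p‖ ≤ C * ‖p - c • q‖) : ‖q‖ ≤ C * ‖p + q‖ := by
  rcases eq_or_ne q 0 with rfl | hq
  · simpa using mul_nonneg (zero_le_one.trans hC) (norm_nonneg p)
  set x := p - (⟪p, q⟫ / ‖q‖ ^ 2) • q with hx
  have hxq : ‖q‖ ^ 2 * ‖x‖ ^ 2 = ‖p‖ ^ 2 * ‖q‖ ^ 2 - ⟪p, q⟫ ^ 2 := by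
    rw [hx, norm_sub_sq_real, real_inner_smul_right, norm_smul, Real.norm_eq_abs, mul_pow,
      sq_abs]
    field_simp
    ring
  -- `‖p‖² ‖p + q‖² - ‖q‖² ‖x‖² = (‖p‖² + ⟪p, q⟫)²`
  have hkey : ‖q‖ * ‖x‖ ≤ ‖p‖ * ‖p + q‖ := by
    refine (pow_le_pow_iff_left₀ (by positivity) (by positivity) two_ne_zero).1 ?_
    rw [mul_pow, mul_pow, hxq, norm_add_sq_real]
    nlinarith [sq_nonneg (‖p‖ ^ 2 + ⟪p, q⟫)]
  have hpx := h (⟪p, q⟫ / ‖q‖ ^ 2)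
  rw [← hx] at hpx
  rcases eq_or_ne x 0 with hx0 | hx0
  · obtain rfl : p = 0 := by simpa [hx0] using hpx
    simpa using le_mul_of_one_le_left (norm_nonneg q) hC
  · refine le_of_mul_le_mul_right ?_ (norm_pos_iff.2 hx0)
    calc ‖q‖ * ‖x‖ ≤ ‖p‖ * ‖p + q‖ := hkey
      _ ≤ C * ‖x‖ * ‖p + q‖ := by gcongr
      _ = C * ‖p + q‖ * ‖x‖ := by ring

theorem norm_sub_le_div_mul_norm_sub_of_inner_map_eq_zero {E H : Type*}
    [NormedAddCommGroup E] [InnerProductSpace ℝ E] [NormedAddCommGroup H] [InnerProductSpace ℝ H]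
    (Ψ : E →ₗ[ℝ] H) {S : Submodule ℝ E} (hS : S ≠ ⊥) {M β : ℝ} (hβ : 0 < β)
    (hΨ : ∀ x, ‖Ψ x‖ ≤ M * ‖x‖) (hΨS : ∀ s ∈ S, β * ‖s‖ ≤ ‖Ψ s‖) {e s₀ : E} (hs₀ : s₀ ∈ S)
    (horth : ∀ s ∈ S, ⟪Ψ (e - s₀), Ψ s⟫ = 0) {s : E} (hs : s ∈ S) :
    ‖e - s₀‖ ≤ M / β * ‖e - s‖ := by
  have hβM : 1 ≤ M / β := by
    obtain ⟨t, ht, ht0⟩ := (Submodule.ne_bot_iff S).1 hS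
    rw [one_le_div hβ]
    exact le_of_mul_le_mul_right ((hΨS t ht).trans (hΨ t)) (norm_pos_iff.2 ht0)
  have hp : s₀ - s ∈ S := S.sub_mem hs₀ hs
  have hΨpq : ⟪Ψ (s₀ - s), Ψ (e - s₀)⟫ = 0 := by rw [real_inner_comm]; exact horth _ hp
  rw [show e - s = (s₀ - s) + (e - s₀) by abel]
  refine norm_le_mul_norm_add_of_forall_norm_le_mul_norm_sub_smul hβM fun c => ?_
  have hproj : ‖Ψ (s₀ - s)‖ ≤ ‖Ψ (s₀ - s - c • (e - s₀))‖ := by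
    refine (mul_self_le_mul_self_iff (norm_nonneg _) (norm_nonneg _)).2 ?_
    rw [Ψ.map_sub (s₀ - s), map_smul, norm_sub_sq_eq_norm_sq_add_norm_sq_real
      (by rw [real_inner_smul_right, hΨpq, mul_zero])]
    exact le_add_of_nonneg_right (mul_self_nonneg _)
  rw [div_mul_eq_mul_div, le_div_iff₀ hβ, mul_comm]
  exact (hΨS _ hp).trans (hproj.trans (hΨ _))

section LeastSquares

variable {X H : Type*} [NormedAddCommGroup X] [NormedSpace ℝ X]
  [NormedAddCommGroup H] [InnerProductSpace ℝ H]

theorem forall_norm_map_sub_le_iff_inner_eq_zero (A : X →ₗ[ℝ] H) {K : Submodule ℝ X} (h : H)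
    {u : X} (hu : u ∈ K) :
    (∀ z ∈ K, ‖A u - h‖ ≤ ‖A z - h‖) ↔ ∀ z ∈ K, ⟪h - A u, A z⟫ = 0 := by
  have hbdd : BddBelow (Set.range fun w : K.map A => ‖h - w‖) :=
    ⟨0, by rintro _ ⟨w, rfl⟩; positivity⟩
  have hAu : A u ∈ K.map A := Submodule.mem_map_of_mem hu
  have key := (K.map A).norm_eq_iInf_iff_real_inner_eq_zero (u := h) hAu
  simp only [Submodule.mem_map, forall_exists_index, and_imp, forall_apply_eq_imp_iff₂] at key
  rw [← key]
  constructor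
  · intro hmin
    refine le_antisymm (le_ciInf fun w => ?_) (ciInf_le hbdd ⟨A u, hAu⟩)
    obtain ⟨z, hz, hzw⟩ := Submodule.mem_map.1 w.2
    rw [← hzw, norm_sub_rev, norm_sub_rev h]
    exact hmin z hz
  · intro heq z hz
    rw [norm_sub_rev, heq, norm_sub_rev]
    exact ciInf_le hbdd ⟨A z, Submodule.mem_map_of_mem hz⟩

theorem eq_of_forall_norm_map_sub_le (A : X →ₗ[ℝ] H) {K : Submodule ℝ X} {C : ℝ}
    (hA : ∀ z ∈ K, ‖z‖ ≤ C * ‖A z‖) (h : H) {u u' : X} (hu : u ∈ K) (hu' : u' ∈ K)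
    (hmin : ∀ z ∈ K, ‖A u - h‖ ≤ ‖A z - h‖) (hmin' : ∀ z ∈ K, ‖A u' - h‖ ≤ ‖A z - h‖) :
    u = u' := by
  have horth := (forall_norm_map_sub_le_iff_inner_eq_zero A h hu).1 hmin
  have horth' := (forall_norm_map_sub_le_iff_inner_eq_zero A h hu').1 hmin'
  have hdiff : u - u' ∈ K := K.sub_mem hu hu'
  have hA0 : A (u - u') = 0 := by
    rw [← inner_self_eq_zero (𝕜 := ℝ)]
    calc ⟪A (u - u'), A (u - u')⟫ = ⟪h - A u', A (u - u')⟫ - ⟪h - A u, A (u - u')⟫ := by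
          rw [← inner_sub_left, sub_sub_sub_cancel_left, map_sub]
      _ = 0 := by rw [horth _ hdiff, horth' _ hdiff, sub_zero]
  have hle := hA _ hdiff
  rw [hA0, norm_zero, mul_zero] at hle
  exact sub_eq_zero.1 (norm_le_zero_iff.1 hle)

theorem exists_forall_norm_map_sub_le (A : X →L[ℝ] H) {K : Submodule ℝ X} [CompleteSpace K]
    {C : ℝ} (hA : ∀ z ∈ K, ‖z‖ ≤ C * ‖A z‖) (h : H) :
    ∃ u ∈ K, ∀ z ∈ K, ‖A u - h‖ ≤ ‖A z - h‖ := by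
  have hanti : AntilipschitzWith C.toNNReal (A.comp K.subtypeL) :=
    AddMonoidHomClass.antilipschitz_of_bound _ fun z =>
      (hA z z.2).trans (mul_le_mul_of_nonneg_right (Real.le_coe_toNNReal C) (norm_nonneg _))
  have : CompleteSpace (K.map (A : X →ₗ[ℝ] H)) := by
    refine IsComplete.completeSpace_coe ?_
    rw [show (K.map (A : X →ₗ[ℝ] H) : Set H) = Set.range (A.comp K.subtypeL) by ext; simp]
    exact (hanti.isUniformInducing (A.comp K.subtypeL).uniformContinuous).isComplete_range
  obtain ⟨u, hu, hAu⟩ := Submodule.mem_map.1 ((K.map (A : X →ₗ[ℝ] H)).starProjection_apply_mem h)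
  refine ⟨u, hu, (forall_norm_map_sub_le_iff_inner_eq_zero (A : X →ₗ[ℝ] H) h hu).2 fun z hz => ?_⟩
  rw [hAu]
  exact (K.map (A : X →ₗ[ℝ] H)).starProjection_inner_eq_zero h _ (Submodule.mem_map_of_mem hz)

theorem existsUnique_forall_norm_map_sub_le (A : X →L[ℝ] H) {K : Submodule ℝ X} [CompleteSpace K]
    {C : ℝ} (hA : ∀ z ∈ K, ‖z‖ ≤ C * ‖A z‖) (h : H) :
    ∃! u, u ∈ K ∧ ∀ z ∈ K, ‖A u - h‖ ≤ ‖A z - h‖ :=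
  let ⟨u, hu, hmin⟩ := exists_forall_norm_map_sub_le A hA h
  ⟨u, ⟨hu, hmin⟩, fun _ ⟨hu', hmin'⟩ =>
    eq_of_forall_norm_map_sub_le (A : X →ₗ[ℝ] H) hA h hu' hu hmin' hmin⟩

end LeastSquares

theorem ContinuousLinearMap.norm_comp_eq_norm_adjoint_toDual_symm {𝕜 H Y : Type*} [RCLike 𝕜]
    [NormedAddCommGroup H] [InnerProductSpace 𝕜 H] [CompleteSpace H]
    [NormedAddCommGroup Y] [InnerProductSpace 𝕜 Y] [CompleteSpace Y]
    (P : H →L[𝕜] Y) (g : StrongDual 𝕜 Y) :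
    ‖g.comp P‖ = ‖adjoint P ((toDual 𝕜 Y).symm g)‖ := by
  rw [← (toDual 𝕜 H).norm_map]
  congr 1
  ext x
  simp [adjoint_inner_left, toDual_symm_apply]

namespace PetrovGalerkin

variable {X Y H : Type*} [NormedAddCommGroup X] [NormedSpace ℝ X]
  [NormedAddCommGroup Y] [InnerProductSpace ℝ Y] [CompleteSpace Y]
  [NormedAddCommGroup H] [InnerProductSpace ℝ H] [CompleteSpace H]
  (G : X ≃L[ℝ] StrongDual ℝ Y) (P : H →L[ℝ] Y) {K : Submodule ℝ X}

theorem existsUnique_forall_norm_comp_le [CompleteSpace K] {β : ℝ} (hβ : 0 < β)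
    (hK : ∀ z ∈ K, β * ‖G z‖ ≤ ‖(G z).comp P‖) (f : StrongDual ℝ Y) :
    ∃! u, u ∈ K ∧ ∀ z ∈ K, ‖(G u - f).comp P‖ ≤ ‖(G z - f).comp P‖ := by
  set T : X ≃L[ℝ] Y := G.trans (toDual ℝ Y).symm.toContinuousLinearEquiv
  set A := (ContinuousLinearMap.adjoint P).comp (T : X →L[ℝ] Y)
  have hA : ∀ z ∈ K, ‖z‖ ≤ ‖(G.symm : StrongDual ℝ Y →L[ℝ] X)‖ / β * ‖A z‖ := by
    intro z hz
    calc ‖z‖ ≤ ‖(G.symm : StrongDual ℝ Y →L[ℝ] X)‖ * ‖G z‖ :=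
          G.norm_le_norm_symm_mul_norm_apply z
      _ ≤ ‖(G.symm : StrongDual ℝ Y →L[ℝ] X)‖ * (‖A z‖ / β) := by
          gcongr
          rw [le_div_iff₀ hβ, mul_comm]
          exact (hK z hz).trans (P.norm_comp_eq_norm_adjoint_toDual_symm (G z)).le
      _ = _ := by ring
  have hobj : ∀ z, ‖(G z - f).comp P‖ =
      ‖A z - ContinuousLinearMap.adjoint P ((toDual ℝ Y).symm f)‖ := fun z => by
    rw [P.norm_comp_eq_norm_adjoint_toDual_symm, map_sub, map_sub]; rfl
  simp only [hobj]
  exact existsUnique_forall_norm_map_sub_le A hA _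

theorem norm_apply_symm_sub_le_div_mul {β : ℝ} (hβ : 0 < β)
    (hK : ∀ z ∈ K, β * ‖G z‖ ≤ ‖(G z).comp P‖) (hK0 : ∃ z ∈ K, G z ≠ 0) {f : StrongDual ℝ Y}
    {u : X} (hu : u ∈ K) (hmin : ∀ z ∈ K, ‖(G u - f).comp P‖ ≤ ‖(G z - f).comp P‖)
    {w : X} (hw : w ∈ K) :
    ‖G (G.symm f - u)‖ ≤ ‖P‖ / β * ‖G (G.symm f - w)‖ := by
  set Ψ := ContinuousLinearMap.adjoint P
  set T : X ≃L[ℝ] Y := G.trans (toDual ℝ Y).symm.toContinuousLinearEquiv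
  have hT : ∀ z, ‖T z‖ = ‖G z‖ := fun z => (toDual ℝ Y).symm.norm_map (G z)
  set e := (toDual ℝ Y).symm f
  have hobj : ∀ z, ‖(G z - f).comp P‖ = ‖Ψ (T z) - Ψ e‖ := fun z => by
    rw [P.norm_comp_eq_norm_adjoint_toDual_symm, map_sub, map_sub]; rfl
  have horth : ∀ z ∈ K, ⟪Ψ e - Ψ (T u), Ψ (T z)⟫ = 0 :=
    (forall_norm_map_sub_le_iff_inner_eq_zero (Ψ.comp (T : X →L[ℝ] Y) : X →ₗ[ℝ] H) (Ψ e) hu).1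
      fun z hz => by have h := hmin z hz; rw [hobj, hobj] at h; exact h
  have hnorm : ∀ v, ‖G (G.symm f - v)‖ = ‖e - T v‖ := fun v => by
    rw [← hT, map_sub]
    congr 2
    exact congrArg (toDual ℝ Y).symm (G.apply_symm_apply f)
  rw [hnorm, hnorm]
  refine norm_sub_le_div_mul_norm_sub_of_inner_map_eq_zero (Ψ : Y →ₗ[ℝ] H)
    (S := K.map (T : X →ₗ[ℝ] Y)) ?_ hβ (fun x => by
      rw [← ContinuousLinearMap.adjoint.norm_map P]; exact Ψ.le_opNorm x) ?_
    (Submodule.mem_map_of_mem hu) ?_ (Submodule.mem_map_of_mem hw)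
  · obtain ⟨z, hz, hGz⟩ := hK0
    refine (Submodule.ne_bot_iff _).2 ⟨T z, Submodule.mem_map_of_mem hz, fun h => hGz ?_⟩
    rw [← norm_eq_zero, ← hT, h, norm_zero]
  · rintro _ ⟨z, hz, rfl⟩
    show β * ‖T z‖ ≤ ‖Ψ (T z)‖
    rw [hT]
    exact (hK z hz).trans (P.norm_comp_eq_norm_adjoint_toDual_symm (G z)).le
  · rintro _ ⟨z, hz, rfl⟩
    rw [map_sub]
    exact horth z hz

end PetrovGalerkin

/-- A synonym for `V` normed by the core `c`, so that it cannot clash with a norm on `V`. -/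
def WithCore {V : Type*} [AddCommGroup V] [Module ℝ V] (_c : InnerProductSpace.Core ℝ V) :
    Type _ := V

namespace WithCore

variable {V : Type*}

section

variable [AddCommGroup V] [Module ℝ V] (c : InnerProductSpace.Core ℝ V)

noncomputable instance : NormedAddCommGroup (WithCore c) :=
  @InnerProductSpace.Core.toNormedAddCommGroup ℝ V _ _ _ c

instance : Module ℝ (WithCore c) := inferInstanceAs (Module ℝ V)

-- `c` is read as a core on `WithCore c`, so that both instances use the same `Module` structure.
noncomputable instance : InnerProductSpace ℝ (WithCore c) :=
  InnerProductSpace.ofCore (show InnerProductSpace.Core ℝ (WithCore c) from c).toCore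

def equiv : V ≃ₗ[ℝ] WithCore c := LinearEquiv.refl ℝ V

lemma norm_equiv (v : V) : ‖equiv c v‖ = √(c.inner v v) := rfl

end

section

variable [NormedAddCommGroup V] [NormedSpace ℝ V] (c : InnerProductSpace.Core ℝ V) {m M : ℝ}

lemma norm_equiv_le (hm : 0 < m) (h : ∀ v : V, m * c.inner v v ≤ ‖v‖ ^ 2) (v : V) :
    ‖equiv c v‖ ≤ (√m)⁻¹ * ‖v‖ := by
  rw [inv_mul_eq_div, le_div_iff₀ (Real.sqrt_pos.2 hm), mul_comm, norm_equiv,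
    ← Real.sqrt_mul hm.le, ← Real.sqrt_sq (norm_nonneg v)]
  exact Real.sqrt_le_sqrt (h v)

lemma norm_equiv_symm_le (h : ∀ v : V, ‖v‖ ^ 2 ≤ M * c.inner v v) (w : WithCore c) :
    ‖(equiv c).symm w‖ ≤ √M * ‖w‖ := by
  obtain ⟨v, rfl⟩ := (equiv c).surjective w
  rw [LinearEquiv.symm_apply_apply, norm_equiv,
    ← Real.sqrt_mul' _ (show 0 ≤ c.inner v v from c.re_inner_nonneg v),
    ← Real.sqrt_sq (norm_nonneg v)]
  exact Real.sqrt_le_sqrt (h v)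

lemma completeSpace_of_bounds [CompleteSpace V] (hm : 0 < m)
    (h : ∀ v : V, m * c.inner v v ≤ ‖v‖ ^ 2 ∧ ‖v‖ ^ 2 ≤ M * c.inner v v) :
    CompleteSpace (WithCore c) :=
  let ι : V ≃L[ℝ] WithCore c := (equiv c).toContinuousLinearEquivOfBounds (√m)⁻¹ √M
    (norm_equiv_le c hm fun v => (h v).1) (norm_equiv_symm_le c fun v => (h v).2)
  (ι.isUniformEmbedding.isUniformInducing.completeSpace_congr ι.surjective).1 inferInstance

end

variable {Y : Type*} [NormedAddCommGroup Y] [NormedSpace ℝ Y] {K : Submodule ℝ Y}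
  (c : InnerProductSpace.Core ℝ K) {m M : ℝ} (hM : ∀ v : K, ‖v‖ ^ 2 ≤ M * c.inner v v)

noncomputable def subtypeL : WithCore c →L[ℝ] Y :=
  LinearMap.mkContinuous (K.subtype ∘ₗ (equiv c).symm.toLinearMap) √M (norm_equiv_symm_le c hM)

lemma norm_subtypeL_le : ‖subtypeL c hM‖ ≤ √M :=
  LinearMap.mkContinuous_norm_le _ (Real.sqrt_nonneg M) _

lemma norm_comp_subtypeL (g : StrongDual ℝ Y) :
    ‖g.comp (subtypeL c hM)‖ = ⨆ y : K, |g y| / √(c.inner y y) := by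
  rw [ContinuousLinearMap.opNorm_eq_iSup_norm_apply_div]
  rfl

lemma sqrt_mul_norm_comp_subtypeL_le (hm : 0 < m) (h : ∀ v : K, m * c.inner v v ≤ ‖v‖ ^ 2)
    (g : StrongDual ℝ Y) : √m * ‖g.comp K.subtypeL‖ ≤ ‖g.comp (subtypeL c hM)‖ := by
  rw [← le_div_iff₀' (Real.sqrt_pos.2 hm), div_eq_inv_mul]
  refine ContinuousLinearMap.opNorm_le_bound _ (by positivity) fun y => ?_
  calc ‖g y‖ = ‖g.comp (subtypeL c hM) (equiv c y)‖ := rfl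
    _ ≤ ‖g.comp (subtypeL c hM)‖ * ((√m)⁻¹ * ‖y‖) :=
      (ContinuousLinearMap.le_opNorm _ _).trans (by gcongr; exact norm_equiv_le c hm h y)
    _ = (√m)⁻¹ * ‖g.comp (subtypeL c hM)‖ * ‖y‖ := by ring

end WithCore

@[reducible]
def Submodule.innerCoreOfForm {Y : Type*} [AddCommGroup Y] [Module ℝ Y] (K : Submodule ℝ Y)
    (b : Y → Y → ℝ) (hsymm : ∀ y z, y ∈ K → z ∈ K → b y z = b z y)
    (hadd : ∀ x y z, x ∈ K → y ∈ K → z ∈ K → b (x + y) z = b x z + b y z)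
    (hsmul : ∀ (c : ℝ) (y z : Y), y ∈ K → z ∈ K → b (c • y) z = c * b y z)
    (hpos : ∀ y ∈ K, y ≠ 0 → 0 < b y y) : InnerProductSpace.Core ℝ K where
  inner y z := b y z
  conj_inner_symm y z := hsymm z y z.2 y.2
  re_inner_nonneg y := by
    rcases eq_or_ne y 0 with rfl | hy
    · simpa using (hsmul 0 0 0 K.zero_mem K.zero_mem).ge
    · exact (hpos y y.2 (by simpa using hy)).le
  add_left x y z := hadd x y z x.2 y.2 z.2
  smul_left y z c := hsmul c y z y.2 z.2
  definite y hy := by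
    by_contra hne
    exact (hpos y y.2 (by simpa using hne)).ne' hy

theorem mul_norm_le_norm_comp_subtypeL_of_eq_iInf {X Y : Type*} [NormedAddCommGroup Y]
    [NormedSpace ℝ Y] (G : X → StrongDual ℝ Y) (K : Submodule ℝ Y) {p : X → Prop} {γ : ℝ}
    (hγ : γ = ⨅ z : {z : X // p z ∧ G z ≠ 0}, (⨆ y : K, |G z y| / ‖(y : Y)‖) / ‖G z‖)
    {z : X} (hz : p z) : γ * ‖G z‖ ≤ ‖(G z).comp K.subtypeL‖ := by
  have hsup : ∀ g : StrongDual ℝ Y, (⨆ y : K, |g y| / ‖(y : Y)‖) = ‖g.comp K.subtypeL‖ :=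
    fun g => by rw [ContinuousLinearMap.opNorm_eq_iSup_norm_apply_div]; rfl
  simp only [hsup] at hγ
  rcases eq_or_ne (G z) 0 with h0 | h0
  · calc γ * ‖G z‖ = 0 := by simp [h0]
      _ ≤ ‖(G z).comp K.subtypeL‖ := ContinuousLinearMap.opNorm_nonneg _
  · have hbdd : BddBelow (Set.range fun z : {z : X // p z ∧ G z ≠ 0} =>
        ‖(G z).comp K.subtypeL‖ / ‖G z‖) := ⟨0, by rintro _ ⟨w, rfl⟩; positivity⟩
    rw [← le_div_iff₀ (norm_pos_iff.2 h0), hγ]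
    exact ciInf_le hbdd ⟨z, hz, h0⟩

theorem stmt10_general
    {X Y : Type*}
    [NormedAddCommGroup X] [InnerProductSpace ℝ X] [CompleteSpace X]
    [NormedAddCommGroup Y] [InnerProductSpace ℝ Y] [CompleteSpace Y]
    (G : X ≃L[ℝ] (Y →L[ℝ] ℝ))
    (Xδ : Submodule ℝ X) (hXδ : IsClosed (Xδ : Set X))
    (Yδ : Submodule ℝ Y) (hYδ : IsClosed (Yδ : Set Y))
    (γδ : ℝ)
    (hγδ : γδ = ⨅ z : {z : X // z ∈ Xδ ∧ G z ≠ 0},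
        (⨆ y : Yδ, |G (z : X) (y : Y)| / ‖(y : Y)‖) / ‖G (z : X)‖)
    (hγδpos : 0 < γδ)
    (ip : Y → Y → ℝ)
    (hip_symm : ∀ y z, y ∈ Yδ → z ∈ Yδ → ip y z = ip z y)
    (hip_add : ∀ x y z, x ∈ Yδ → y ∈ Yδ → z ∈ Yδ → ip (x + y) z = ip x z + ip y z)
    (hip_smul : ∀ (c : ℝ) (y z : Y), y ∈ Yδ → z ∈ Yδ → ip (c • y) z = c * ip y z)
    (hip_pos : ∀ y ∈ Yδ, y ≠ 0 → 0 < ip y y)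
    (mc Mc : ℝ) (hmc : 0 < mc)
    (hequiv : ∀ y ∈ Yδ, mc * ip y y ≤ ‖y‖ ^ 2 ∧ ‖y‖ ^ 2 ≤ Mc * ip y y)
    (f : Y →L[ℝ] ℝ) :
    (∃! uδ : X, uδ ∈ Xδ ∧
        ∀ z ∈ Xδ,
          (⨆ y : Yδ, |(G uδ - f) (y : Y)| / Real.sqrt (ip (y : Y) (y : Y))) ≤
          (⨆ y : Yδ, |(G z - f) (y : Y)| / Real.sqrt (ip (y : Y) (y : Y)))) ∧
    (∀ uδ ∈ Xδ,
      (∀ z ∈ Xδ,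
          (⨆ y : Yδ, |(G uδ - f) (y : Y)| / Real.sqrt (ip (y : Y) (y : Y))) ≤
          (⨆ y : Yδ, |(G z - f) (y : Y)| / Real.sqrt (ip (y : Y) (y : Y)))) →
        (‖G (G.symm f - uδ)‖ ≤
            (Real.sqrt Mc / (γδ * Real.sqrt mc)) * ⨅ w : Xδ, ‖G (G.symm f - (w : X))‖) ∧
        (‖G.symm f - uδ‖ ≤
            Real.sqrt (Mc / mc) *
              (‖(G : X →L[ℝ] (Y →L[ℝ] ℝ))‖ * ‖(G.symm : (Y →L[ℝ] ℝ) →L[ℝ] X)‖ / γδ) *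
              ⨅ w : Xδ, ‖G.symm f - (w : X)‖)) := by
  have : CompleteSpace Xδ := hXδ.completeSpace_coe
  have : CompleteSpace Yδ := hYδ.completeSpace_coe
  set c := Yδ.innerCoreOfForm ip hip_symm hip_add hip_smul hip_pos
  have hc : ∀ v : Yδ, mc * c.inner v v ≤ ‖v‖ ^ 2 ∧ ‖v‖ ^ 2 ≤ Mc * c.inner v v :=
    fun v => hequiv v v.2
  have : CompleteSpace (WithCore c) := WithCore.completeSpace_of_bounds c hmc hc
  set P := WithCore.subtypeL c fun v => (hc v).2
  have hK : ∀ z ∈ Xδ, γδ * √mc * ‖G z‖ ≤ ‖(G z).comp P‖ := fun z hz =>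
    calc γδ * √mc * ‖G z‖ = √mc * (γδ * ‖G z‖) := by ring
      _ ≤ √mc * ‖(G z).comp Yδ.subtypeL‖ := by
        gcongr; exact mul_norm_le_norm_comp_subtypeL_of_eq_iInf G Yδ hγδ hz
      _ ≤ ‖(G z).comp P‖ :=
        WithCore.sqrt_mul_norm_comp_subtypeL_le c _ hmc (fun v => (hc v).1) (G z)
  have hK0 : ∃ z ∈ Xδ, G z ≠ 0 := by
    obtain ⟨⟨z, hz, hGz⟩⟩ := Real.nonempty_of_iInf_pos (hγδ ▸ hγδpos)
    exact ⟨z, hz, hGz⟩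
  have hβ : 0 < γδ * √mc := by positivity
  have hobj : ∀ g : Y →L[ℝ] ℝ, (⨆ y : Yδ, |g y| / √(ip y y)) = ‖g.comp P‖ :=
    fun g => (WithCore.norm_comp_subtypeL c _ g).symm
  simp only [hobj]
  refine ⟨PetrovGalerkin.existsUnique_forall_norm_comp_le G P hβ hK f, fun uδ huδ hmin => ?_⟩
  have hG : ∀ w ∈ Xδ, ‖G (G.symm f - uδ)‖ ≤ √Mc / (γδ * √mc) * ‖G (G.symm f - w)‖ :=
    fun w hw => (PetrovGalerkin.norm_apply_symm_sub_le_div_mul G P hβ hK hK0 huδ hmin hw).trans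
      (by gcongr; exact WithCore.norm_subtypeL_le c _)
  have hC : 0 ≤ √Mc / (γδ * √mc) := by positivity
  refine ⟨?_, ?_⟩
  · rw [Real.mul_iInf_of_nonneg hC]
    exact le_ciInf fun w => hG w w.2
  · set nG := ‖(G : X →L[ℝ] (Y →L[ℝ] ℝ))‖
    set nGinv := ‖(G.symm : (Y →L[ℝ] ℝ) →L[ℝ] X)‖
    rw [show √(Mc / mc) * (nG * nGinv / γδ) = nGinv * (√Mc / (γδ * √mc)) * nG by
        rw [Real.sqrt_div' _ hmc.le]; ring,
      Real.mul_iInf_of_nonneg (by positivity)]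
    exact le_ciInf fun w => G.norm_le_of_norm_apply_le hC (hG w w.2)

/-- Let `X`, `Y` be real Hilbert spaces, `G ∈ Lis(X,Y')`, `Xδ ⊆ X`,
`Yδ ⊆ Y` closed subspaces with inf-sup constant `γδ > 0`. Let `ip` be another inner
product on `Yδ` whose norm `‖y‖_δ := √(ip y y)` satisfies
`m‖y‖_δ² ≤ ‖y‖² ≤ M‖y‖_δ²` on `Yδ` with `0 < m ≤ M`. Then for every `f ∈ Y'` there is a
unique `uδ ∈ Xδ` minimizing `z ↦ sup_{0 ≠ y ∈ Yδ} |(Gz − f)(y)|/‖y‖_δ` over `Xδ`, and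
with `u := G⁻¹ f` it satisfies
`‖G(u − uδ)‖_{Y'} ≤ (√M/(γδ√m)) inf_{w ∈ Xδ} ‖G(u − w)‖_{Y'}` and
`‖u − uδ‖ ≤ √(M/m) (‖G‖ ‖G⁻¹‖ / γδ) inf_{w ∈ Xδ} ‖u − w‖`. -/
theorem stmt10
    {X Y : Type*}
    [NormedAddCommGroup X] [InnerProductSpace ℝ X] [CompleteSpace X]
    [NormedAddCommGroup Y] [InnerProductSpace ℝ Y] [CompleteSpace Y]
    (G : X ≃L[ℝ] (Y →L[ℝ] ℝ))
    (Xδ : Submodule ℝ X) (hXδ : IsClosed (Xδ : Set X))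
    (Yδ : Submodule ℝ Y) (hYδ : IsClosed (Yδ : Set Y))
    (γδ : ℝ)
    (hγδ : γδ = ⨅ z : {z : X // z ∈ Xδ ∧ G z ≠ 0},
        (⨆ y : Yδ, |G (z : X) (y : Y)| / ‖(y : Y)‖) / ‖G (z : X)‖)
    (hγδpos : 0 < γδ)
    (ip : Y → Y → ℝ)
    (hip_symm : ∀ y z, y ∈ Yδ → z ∈ Yδ → ip y z = ip z y)
    (hip_add : ∀ x y z, x ∈ Yδ → y ∈ Yδ → z ∈ Yδ → ip (x + y) z = ip x z + ip y z)
    (hip_smul : ∀ (c : ℝ) (y z : Y), y ∈ Yδ → z ∈ Yδ → ip (c • y) z = c * ip y z)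
    (hip_pos : ∀ y ∈ Yδ, y ≠ 0 → 0 < ip y y)
    (mc Mc : ℝ) (hmc : 0 < mc) (hmM : mc ≤ Mc)
    (hequiv : ∀ y ∈ Yδ, mc * ip y y ≤ ‖y‖ ^ 2 ∧ ‖y‖ ^ 2 ≤ Mc * ip y y)
    (f : Y →L[ℝ] ℝ) :
    (∃! uδ : X, uδ ∈ Xδ ∧
        ∀ z ∈ Xδ,
          (⨆ y : Yδ, |(G uδ - f) (y : Y)| / Real.sqrt (ip (y : Y) (y : Y))) ≤
          (⨆ y : Yδ, |(G z - f) (y : Y)| / Real.sqrt (ip (y : Y) (y : Y)))) ∧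
    (∀ uδ ∈ Xδ,
      (∀ z ∈ Xδ,
          (⨆ y : Yδ, |(G uδ - f) (y : Y)| / Real.sqrt (ip (y : Y) (y : Y))) ≤
          (⨆ y : Yδ, |(G z - f) (y : Y)| / Real.sqrt (ip (y : Y) (y : Y)))) →
        (‖G (G.symm f - uδ)‖ ≤
            (Real.sqrt Mc / (γδ * Real.sqrt mc)) * ⨅ w : Xδ, ‖G (G.symm f - (w : X))‖) ∧
        (‖G.symm f - uδ‖ ≤
            Real.sqrt (Mc / mc) *
              (‖(G : X →L[ℝ] (Y →L[ℝ] ℝ))‖ * ‖(G.symm : (Y →L[ℝ] ℝ) →L[ℝ] X)‖ / γδ) *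
              ⨅ w : Xδ, ‖G.symm f - (w : X)‖)) :=
  stmt10_general G Xδ hXδ Yδ hYδ γδ hγδ hγδpos ip hip_symm hip_add hip_smul hip_pos mc Mc hmc hequiv
    f
end

section
/- Let X be a real normed space, Y a real Hilbert space, G : X → Y' a bounded linear map, and let X^δ ⊆ X and Y^δ ⊆ Y be linear subspaces such that G(X^δ) ≠ {0} and Y^δ ≠ {0}. Suppose Π : Y → Y is a bounded linear map with range contained in Y^δ and such that (Gz)(y − Πy) = 0 for all z ∈ X^δ and all y ∈ Y (a Fortin interpolator). Then for every z ∈ X^δ, ‖Gz‖_{(Y^δ)'} ≥ ‖Π‖_{L(Y,Y)}^{-1} · ‖Gz‖_{Y'}; that is, the inf-sup constant γ^δ := inf{ ‖Gz‖_{(Y^δ)'}/‖Gz‖_{Y'} : z ∈ X^δ, Gz ≠ 0 } satisfies γ^δ ≥ ‖Π‖_{L(Y,Y)}^{-1}. -/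
/-! A Fortin interpolator `P` lets every functional `f` that annihilates `y - P y` be evaluated
on `Yδ` instead of `Y`: `|f y| = |f (P y)| ≤ ‖f‖_{(Yδ)'} ‖P‖ ‖y‖`, hence
`‖f‖_{Y'} ≤ ‖P‖ ‖f‖_{(Yδ)'}`; dividing by `‖P‖` is harmless even when `‖P‖ = 0`, since `0⁻¹ = 0`. -/

section RestrictedDualNorm

variable {E : Type*} [NormedAddCommGroup E] [NormedSpace ℝ E]

/-- The paper's `‖f‖_{V'}`; the term at `y = 0` is `0 / 0 = 0`, so `V = ⊥` gives `0`. -/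
noncomputable def restrictedDualNorm (V : Submodule ℝ E) (f : E →L[ℝ] ℝ) : ℝ :=
  ⨆ y : V, |f y| / ‖(y : E)‖

variable (V : Submodule ℝ E) (f : E →L[ℝ] ℝ)

theorem bddAbove_range_abs_div_norm :
    BddAbove (Set.range fun y : V => |f y| / ‖(y : E)‖) := by
  refine ⟨‖f‖, ?_⟩
  rintro _ ⟨y, rfl⟩
  exact div_le_of_le_mul₀ (norm_nonneg _) (norm_nonneg _) (f.le_opNorm y)

theorem restrictedDualNorm_nonneg : 0 ≤ restrictedDualNorm V f :=
  Real.iSup_nonneg fun _ => by positivity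

theorem abs_apply_le_restrictedDualNorm_mul_norm {y : E} (hy : y ∈ V) :
    |f y| ≤ restrictedDualNorm V f * ‖y‖ := by
  rcases eq_or_ne y 0 with rfl | hy0
  · simp
  · rw [← div_le_iff₀ (norm_pos_iff.mpr hy0)]
    exact le_ciSup (bddAbove_range_abs_div_norm V f) ⟨y, hy⟩

variable {V f} {P : E →L[ℝ] E}

theorem opNorm_le_mul_restrictedDualNorm_of_fortin (hPV : ∀ y, P y ∈ V)
    (hfP : ∀ y, f (y - P y) = 0) : ‖f‖ ≤ ‖P‖ * restrictedDualNorm V f := by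
  refine f.opNorm_le_bound (mul_nonneg (norm_nonneg P) (restrictedDualNorm_nonneg V f))
    fun y => ?_
  have hfy : f y = f (P y) := sub_eq_zero.mp (by simpa only [map_sub] using hfP y)
  calc ‖f y‖ = |f (P y)| := by rw [hfy, Real.norm_eq_abs]
    _ ≤ restrictedDualNorm V f * ‖P y‖ := abs_apply_le_restrictedDualNorm_mul_norm V f (hPV y)
    _ ≤ restrictedDualNorm V f * (‖P‖ * ‖y‖) := by
        gcongr
        · exact restrictedDualNorm_nonneg V f
        · exact P.le_opNorm y
    _ = ‖P‖ * restrictedDualNorm V f * ‖y‖ := by ring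

theorem inv_opNorm_mul_le_restrictedDualNorm_of_fortin (hPV : ∀ y, P y ∈ V)
    (hfP : ∀ y, f (y - P y) = 0) : ‖P‖⁻¹ * ‖f‖ ≤ restrictedDualNorm V f := by
  rcases (norm_nonneg P).eq_or_lt with hP | hP
  · rw [← hP, inv_zero, zero_mul]
    exact restrictedDualNorm_nonneg V f
  · rw [inv_mul_le_iff₀ hP]
    exact opNorm_le_mul_restrictedDualNorm_of_fortin hPV hfP

end RestrictedDualNorm

theorem stmt11_general
    {X Y : Type*}
    [NormedAddCommGroup X] [NormedSpace ℝ X]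
    [NormedAddCommGroup Y] [InnerProductSpace ℝ Y]
    (G : X →L[ℝ] (Y →L[ℝ] ℝ))
    (Xδ : Submodule ℝ X) (Yδ : Submodule ℝ Y)
    (hGXδ : ∃ z ∈ Xδ, G z ≠ 0)
    (P : Y →L[ℝ] Y)
    (hPrange : ∀ y : Y, P y ∈ Yδ)
    (hFortin : ∀ z ∈ Xδ, ∀ y : Y, G z (y - P y) = 0) :
    (∀ z ∈ Xδ, ‖P‖⁻¹ * ‖G z‖ ≤ ⨆ y : Yδ, |G z (y : Y)| / ‖(y : Y)‖) ∧
    ‖P‖⁻¹ ≤ ⨅ z : {z : X // z ∈ Xδ ∧ G z ≠ 0},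
        (⨆ y : Yδ, |G (z : X) (y : Y)| / ‖(y : Y)‖) / ‖G (z : X)‖ := by
  have pointwise : ∀ z ∈ Xδ, ‖P‖⁻¹ * ‖G z‖ ≤ restrictedDualNorm Yδ (G z) := fun z hz =>
    inv_opNorm_mul_le_restrictedDualNorm_of_fortin hPrange (hFortin z hz)
  refine ⟨pointwise, ?_⟩
  obtain ⟨z₀, hz₀, hGz₀⟩ := hGXδ
  have : Nonempty {z : X // z ∈ Xδ ∧ G z ≠ 0} := ⟨⟨z₀, hz₀, hGz₀⟩⟩
  refine le_ciInf fun ⟨z, hz, hGz⟩ => ?_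
  rw [le_div_iff₀ (norm_pos_iff.mpr hGz)]
  exact pointwise z hz

/-- Let `X` be a real normed space, `Y` a real Hilbert space,
`G : X → Y'` bounded linear, `Xδ ⊆ X`, `Yδ ⊆ Y` subspaces with `G(Xδ) ≠ {0}` and
`Yδ ≠ {0}`. If `P : Y → Y` is a bounded linear map with range in `Yδ` such that
`(Gz)(y − Py) = 0` for all `z ∈ Xδ`, `y ∈ Y` (a Fortin interpolator), then for every
`z ∈ Xδ`, `‖Gz‖_{(Yδ)'} ≥ ‖P‖⁻¹ ‖Gz‖_{Y'}`; that is, the inf-sup constant `γδ`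
satisfies `γδ ≥ ‖P‖⁻¹`. -/
theorem stmt11
    {X Y : Type*}
    [NormedAddCommGroup X] [NormedSpace ℝ X]
    [NormedAddCommGroup Y] [InnerProductSpace ℝ Y] [CompleteSpace Y]
    (G : X →L[ℝ] (Y →L[ℝ] ℝ))
    (Xδ : Submodule ℝ X) (Yδ : Submodule ℝ Y)
    (hGXδ : ∃ z ∈ Xδ, G z ≠ 0) (hYδ : Yδ ≠ ⊥)
    (P : Y →L[ℝ] Y)
    (hPrange : ∀ y : Y, P y ∈ Yδ)
    (hFortin : ∀ z ∈ Xδ, ∀ y : Y, G z (y - P y) = 0) :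
    (∀ z ∈ Xδ, ‖P‖⁻¹ * ‖G z‖ ≤ ⨆ y : Yδ, |G z (y : Y)| / ‖(y : Y)‖) ∧
    ‖P‖⁻¹ ≤ ⨅ z : {z : X // z ∈ Xδ ∧ G z ≠ 0},
        (⨆ y : Yδ, |G (z : X) (y : Y)| / ‖(y : Y)‖) / ‖G (z : X)‖ :=
  stmt11_general G Xδ Yδ hGXδ P hPrange hFortin
end

section
/- Let X be a real Hilbert space, let 0 ≤ k ≤ m with m ≥ 1, and let Y_1, …, Y_m be real Hilbert spaces. Let V := Y_1' × ⋯ × Y_k' × Y_{k+1} × ⋯ × Y_m with norm ‖(g_1,…,g_k,y_{k+1},…,y_m)‖_V² := Σ_{i=1}^k ‖g_i‖_{Y_i'}² + Σ_{i=k+1}^m ‖y_i‖_{Y_i}². Let G = (G_1,…,G_m) ∈ Lis(X,V), let f = (f_1,…,f_m) ∈ V, and let u := G⁻¹f. Let X^δ ⊆ X be a linear subspace. For each 1 ≤ i ≤ k, let Y_i^δ ⊆ Y_i be a closed linear subspace, let ⟨·,·⟩_{Y_i^δ} be an inner product on Y_i^δ whose norm ‖·‖_{Y_i^δ} satisfies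 m_i·‖y‖_{Y_i^δ}² ≤ ‖y‖_{Y_i}² ≤ M_i·‖y‖_{Y_i^δ}² for all y ∈ Y_i^δ with constants 0 < m_i ≤ M_i, and let Π_i : Y_i → Y_i be a bounded linear map with range contained in Y_i^δ and (G_i z)(y − Π_i y) = 0 for all z ∈ X^δ and y ∈ Y_i. For w ∈ X^δ define the estimator E(w,f)² := Σ_{i=1}^k sup_{0 ≠ y ∈ Y_i^δ} |(f_i − G_i w)(y)|²/‖y‖_{Y_i^δ}² + Σ_{i=k+1}^m ‖f_i − G_i w‖_{Y_i}². Then for every w ∈ X^δ: ‖G‖_{L(X,V)}^{-2} · min(1, min_{1≤i≤k} M_i^{-1}) · E(w,f)² ≤ ‖u − w‖_X² ≤ ‖G⁻¹‖_{L(V,X)}² · max(1, 2·max_{1≤i≤k} m_i^{-1}‖Π_i‖_{L(Y_i,Y_i)}²) · E(w,f)² + 2‖G⁻¹‖_{L(V,X)}² · Σ_{i=1}^k ‖(Id − Π_i')f_i‖_{Y_i'}², where Π_i' : Y_i' → Y_i' is the adjoint of Π_i, (Π_i' g)(y) := g(Π_i y). -/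
/-!
Both bounds compare `‖u - w‖` with the `V`-norm of the residual `G(u - w) = f - Gw`, which is
within the factors `‖G‖`, `‖G⁻¹‖` of it. For a dual component the discrete dual norm of the
residual is at most `√M_i` times its `Y_i'`-norm, giving the lower bound. Conversely, by the
Fortin property `(f_i - G_i w)(y) = (f_i - G_i w)(Π_i y) + f_i(y - Π_i y)`, and `Π_i y ∈ Y_i^δ`
is controlled by `‖Π_i‖ ‖y‖ / √m_i` in the discrete norm; squaring with
`(a + b)² ≤ 2a² + 2b²` gives the upper bound.
-/

open Real

/-- The `Y^δ`-dual norm `sup_{0 ≠ y ∈ D} |r y| / √(ip y y)`; the term `y = 0` contributes `0`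
since `x / 0 = 0` in Lean. -/
noncomputable def discreteDualNorm {E : Type*} [NormedAddCommGroup E] [NormedSpace ℝ E]
    (D : Submodule ℝ E) (ip : E → E → ℝ) (r : E →L[ℝ] ℝ) : ℝ :=
  ⨆ y : D, |r y| / √(ip y y)

theorem Real.le_sqrt_mul_sqrt_of_sq_le {a b M : ℝ} (hM : 0 ≤ M) (h : b ^ 2 ≤ M * a) :
    b ≤ √M * √a := by
  rw [← Real.sqrt_mul hM]
  exact (le_abs_self b).trans (Real.abs_le_sqrt h)

theorem Real.sqrt_le_div_sqrt_of_mul_le {a b m : ℝ} (hm : 0 < m) (hb : 0 ≤ b)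
    (h : m * a ≤ b ^ 2) : √a ≤ b / √m := by
  rw [le_div_iff₀ (Real.sqrt_pos.mpr hm), ← Real.sqrt_mul' _ hm.le, ← Real.sqrt_sq hb]
  exact Real.sqrt_le_sqrt (by linarith)

section DiscreteDualNorm

variable {E : Type*} [NormedAddCommGroup E] [NormedSpace ℝ E]
  {D : Submodule ℝ E} {ip : E → E → ℝ} {M m : ℝ}

theorem discreteDualNorm_nonneg (r : E →L[ℝ] ℝ) : 0 ≤ discreteDualNorm D ip r :=
  Real.iSup_nonneg fun _ => by positivity

theorem div_sqrt_le_sqrt_mul_norm (hM : 0 ≤ M) (hD : ∀ y ∈ D, ‖y‖ ^ 2 ≤ M * ip y y)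
    (r : E →L[ℝ] ℝ) (y : D) : |r y| / √(ip y y) ≤ √M * ‖r‖ :=
  div_le_of_le_mul₀ (Real.sqrt_nonneg _) (by positivity) <|
    calc |r y| ≤ ‖r‖ * ‖(y : E)‖ := r.le_opNorm y
      _ ≤ ‖r‖ * (√M * √(ip y y)) := by
        gcongr; exact Real.le_sqrt_mul_sqrt_of_sq_le hM (hD y y.2)
      _ = √M * ‖r‖ * √(ip y y) := by ring

theorem discreteDualNorm_sq_le (hM : 0 ≤ M) (hD : ∀ y ∈ D, ‖y‖ ^ 2 ≤ M * ip y y)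
    (r : E →L[ℝ] ℝ) : discreteDualNorm D ip r ^ 2 ≤ M * ‖r‖ ^ 2 :=
  calc discreteDualNorm D ip r ^ 2 ≤ (√M * ‖r‖) ^ 2 := by
        gcongr
        · exact discreteDualNorm_nonneg r
        · exact ciSup_le (div_sqrt_le_sqrt_mul_norm hM hD r)
    _ = M * ‖r‖ ^ 2 := by rw [mul_pow, Real.sq_sqrt hM]

theorem mul_discreteDualNorm_sq_le {c : ℝ} (hM : 0 < M) (hc : c ≤ M⁻¹)
    (hD : ∀ y ∈ D, ‖y‖ ^ 2 ≤ M * ip y y) (r : E →L[ℝ] ℝ) :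
    c * discreteDualNorm D ip r ^ 2 ≤ ‖r‖ ^ 2 :=
  (mul_le_mul_of_nonneg_right hc (sq_nonneg _)).trans <|
    (inv_mul_le_iff₀ hM).mpr (discreteDualNorm_sq_le hM.le hD r)

theorem abs_apply_le_discreteDualNorm_mul (hM : 0 ≤ M) (hD : ∀ y ∈ D, ‖y‖ ^ 2 ≤ M * ip y y)
    (r : E →L[ℝ] ℝ) {y : E} (hy : y ∈ D) :
    |r y| ≤ discreteDualNorm D ip r * √(ip y y) := by
  rcases (Real.sqrt_nonneg (ip y y)).eq_or_lt with h0 | hpos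
  · have : y = 0 := norm_le_zero_iff.mp <| by
      simpa [← h0] using Real.le_sqrt_mul_sqrt_of_sq_le hM (hD y hy)
    simpa [this] using
      mul_nonneg (discreteDualNorm_nonneg (D := D) r) (Real.sqrt_nonneg (ip 0 0))
  · have hbdd : BddAbove (Set.range fun y : D => |r y| / √(ip y y)) :=
      ⟨_, Set.forall_mem_range.2 (div_sqrt_le_sqrt_mul_norm hM hD r)⟩
    exact (div_le_iff₀ hpos).mp (le_ciSup hbdd (⟨y, hy⟩ : D))

theorem norm_sub_le_of_fortin (hm : 0 < m) (hM : 0 ≤ M)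
    (hDm : ∀ y ∈ D, m * ip y y ≤ ‖y‖ ^ 2) (hDM : ∀ y ∈ D, ‖y‖ ^ 2 ≤ M * ip y y)
    {P : E →L[ℝ] E} (hP : ∀ y, P y ∈ D) (f g : E →L[ℝ] ℝ) (hg : ∀ y, g (y - P y) = 0) :
    ‖f - g‖ ≤ ‖P‖ * discreteDualNorm D ip (f - g) / √m +
      ‖f.comp (ContinuousLinearMap.id ℝ E - P)‖ := by
  set S := discreteDualNorm D ip (f - g)
  have hS : 0 ≤ S := discreteDualNorm_nonneg _
  refine (f - g).opNorm_le_bound (by positivity) fun y => ?_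
  have hsplit : (f - g) y = (f - g) (P y) + f.comp (ContinuousLinearMap.id ℝ E - P) y := by
    have := hg y
    simp only [sub_apply, ContinuousLinearMap.comp_apply,
      ContinuousLinearMap.id_apply, map_sub] at this ⊢
    linarith
  have hdiscrete : ‖(f - g) (P y)‖ ≤ ‖P‖ * S / √m * ‖y‖ :=
    calc ‖(f - g) (P y)‖ ≤ S * √(ip (P y) (P y)) :=
          abs_apply_le_discreteDualNorm_mul hM hDM _ (hP y)
      _ ≤ S * (‖P y‖ / √m) := by
          gcongr; exact Real.sqrt_le_div_sqrt_of_mul_le hm (norm_nonneg _) (hDm _ (hP y))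
      _ ≤ S * (‖P‖ * ‖y‖ / √m) := by gcongr; exact P.le_opNorm y
      _ = ‖P‖ * S / √m * ‖y‖ := by ring
  rw [hsplit, add_mul]
  exact (norm_add_le _ _).trans (add_le_add hdiscrete (ContinuousLinearMap.le_opNorm _ _))

theorem norm_sub_sq_le_of_fortin {c : ℝ} (hm : 0 < m) (hM : 0 ≤ M)
    (hDm : ∀ y ∈ D, m * ip y y ≤ ‖y‖ ^ 2) (hDM : ∀ y ∈ D, ‖y‖ ^ 2 ≤ M * ip y y)
    {P : E →L[ℝ] E} (hP : ∀ y, P y ∈ D) (hc : 2 * m⁻¹ * ‖P‖ ^ 2 ≤ c)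
    (f g : E →L[ℝ] ℝ) (hg : ∀ y, g (y - P y) = 0) :
    ‖f - g‖ ^ 2 ≤ c * discreteDualNorm D ip (f - g) ^ 2 +
      2 * ‖f.comp (ContinuousLinearMap.id ℝ E - P)‖ ^ 2 :=
  calc ‖f - g‖ ^ 2
      ≤ (‖P‖ * discreteDualNorm D ip (f - g) / √m +
          ‖f.comp (ContinuousLinearMap.id ℝ E - P)‖) ^ 2 := by
        gcongr; exact norm_sub_le_of_fortin hm hM hDm hDM hP f g hg
    _ ≤ 2 * ((‖P‖ * discreteDualNorm D ip (f - g) / √m) ^ 2 +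
          ‖f.comp (ContinuousLinearMap.id ℝ E - P)‖ ^ 2) := add_sq_le
    _ = 2 * m⁻¹ * ‖P‖ ^ 2 * discreteDualNorm D ip (f - g) ^ 2 +
          2 * ‖f.comp (ContinuousLinearMap.id ℝ E - P)‖ ^ 2 := by
        rw [div_pow, Real.sq_sqrt hm.le]; ring
    _ ≤ _ := by gcongr

end DiscreteDualNorm

theorem stmt13_general
    {X : Type*} [NormedAddCommGroup X] [InnerProductSpace ℝ X]
    {m k : ℕ}
    (Y : Fin m → Type*) [∀ i, NormedAddCommGroup (Y i)] [∀ i, InnerProductSpace ℝ (Y i)]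
    (Gd : ∀ i : Fin m, X →L[ℝ] (Y i →L[ℝ] ℝ))
    (Gm : ∀ i : Fin m, X →L[ℝ] Y i)
    (CG CGinv : ℝ) (hCG0 : 0 < CG)
    (hCG : ∀ x : X,
      (∑ i ∈ Finset.univ.filter (fun i : Fin m => (i : ℕ) < k), ‖Gd i x‖ ^ 2) +
      (∑ i ∈ Finset.univ.filter (fun i : Fin m => ¬ (i : ℕ) < k), ‖Gm i x‖ ^ 2) ≤
        CG ^ 2 * ‖x‖ ^ 2)
    (hCGinv : ∀ x : X,
      ‖x‖ ^ 2 ≤ CGinv ^ 2 *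
        ((∑ i ∈ Finset.univ.filter (fun i : Fin m => (i : ℕ) < k), ‖Gd i x‖ ^ 2) +
         (∑ i ∈ Finset.univ.filter (fun i : Fin m => ¬ (i : ℕ) < k), ‖Gm i x‖ ^ 2)))
    (fd : ∀ i : Fin m, Y i →L[ℝ] ℝ) (fm : ∀ i : Fin m, Y i)
    (u : X)
    (hud : ∀ i : Fin m, (i : ℕ) < k → Gd i u = fd i)
    (hum : ∀ i : Fin m, ¬ (i : ℕ) < k → Gm i u = fm i)
    (Xδ : Submodule ℝ X)
    (Yd : ∀ i : Fin m, Submodule ℝ (Y i))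
    (ip : ∀ i : Fin m, Y i → Y i → ℝ)
    (mc Mc : Fin m → ℝ)
    (hmc : ∀ i : Fin m, (i : ℕ) < k → 0 < mc i)
    (hmM : ∀ i : Fin m, (i : ℕ) < k → mc i ≤ Mc i)
    (hequiv : ∀ i : Fin m, (i : ℕ) < k → ∀ y ∈ Yd i,
        mc i * ip i y y ≤ ‖y‖ ^ 2 ∧ ‖y‖ ^ 2 ≤ Mc i * ip i y y)
    (P : ∀ i : Fin m, Y i →L[ℝ] Y i)
    (hPrange : ∀ i : Fin m, (i : ℕ) < k → ∀ y : Y i, P i y ∈ Yd i)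
    (hFortin : ∀ i : Fin m, (i : ℕ) < k → ∀ z ∈ Xδ, ∀ y : Y i, Gd i z (y - P i y) = 0) :
    ∀ w ∈ Xδ,
      (CG⁻¹ ^ 2 *
          sInf (insert (1 : ℝ) ((fun i : Fin m => (Mc i)⁻¹) '' {i : Fin m | (i : ℕ) < k})) *
          ((∑ i ∈ Finset.univ.filter (fun i : Fin m => (i : ℕ) < k),
              (⨆ y : Yd i,
                |(fd i - Gd i w) (y : Y i)| / Real.sqrt (ip i (y : Y i) (y : Y i))) ^ 2) +
           (∑ i ∈ Finset.univ.filter (fun i : Fin m => ¬ (i : ℕ) < k),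
              ‖fm i - Gm i w‖ ^ 2)) ≤
        ‖u - w‖ ^ 2) ∧
      (‖u - w‖ ^ 2 ≤
        CGinv ^ 2 *
          sSup (insert (1 : ℝ)
            ((fun i : Fin m => 2 * (mc i)⁻¹ * ‖P i‖ ^ 2) '' {i : Fin m | (i : ℕ) < k})) *
          ((∑ i ∈ Finset.univ.filter (fun i : Fin m => (i : ℕ) < k),
              (⨆ y : Yd i,
                |(fd i - Gd i w) (y : Y i)| / Real.sqrt (ip i (y : Y i) (y : Y i))) ^ 2) +
           (∑ i ∈ Finset.univ.filter (fun i : Fin m => ¬ (i : ℕ) < k),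
              ‖fm i - Gm i w‖ ^ 2)) +
        2 * CGinv ^ 2 *
          ∑ i ∈ Finset.univ.filter (fun i : Fin m => (i : ℕ) < k),
            ‖(fd i).comp (ContinuousLinearMap.id ℝ (Y i) - P i)‖ ^ 2) := by
  intro w hw
  set I := Finset.univ.filter (fun i : Fin m => (i : ℕ) < k)
  set J := Finset.univ.filter (fun i : Fin m => ¬ (i : ℕ) < k)
  simp only [← discreteDualNorm.eq_1]
  set S := fun i => discreteDualNorm (Yd i) (ip i) (fd i - Gd i w)
  have hI : ∀ {i}, i ∈ I ↔ (i : ℕ) < k := by simp [I]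
  have hJ : ∀ {i}, i ∈ J ↔ ¬ (i : ℕ) < k := by simp [J]
  have hres_d : ∀ i ∈ I, Gd i (u - w) = fd i - Gd i w := fun i hi => by
    rw [map_sub, hud i (hI.mp hi)]
  have hres_m : ∀ i ∈ J, Gm i (u - w) = fm i - Gm i w := fun i hi => by
    rw [map_sub, hum i (hJ.mp hi)]
  have hMc : ∀ i ∈ I, 0 < Mc i := fun i hi => (hmc i (hI.mp hi)).trans_le (hmM i (hI.mp hi))
  have hupper : ∀ i ∈ I, ∀ y ∈ Yd i, ‖y‖ ^ 2 ≤ Mc i * ip i y y :=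
    fun i hi y hy => (hequiv i (hI.mp hi) y hy).2
  set cI := sInf (insert (1 : ℝ) ((fun i : Fin m => (Mc i)⁻¹) '' {i : Fin m | (i : ℕ) < k}))
  set cS := sSup (insert (1 : ℝ)
    ((fun i : Fin m => 2 * (mc i)⁻¹ * ‖P i‖ ^ 2) '' {i : Fin m | (i : ℕ) < k}))
  have hcI_le_one : cI ≤ 1 := csInf_le (Set.toFinite _).bddBelow (Set.mem_insert _ _)
  have hcI_le : ∀ i ∈ I, cI ≤ (Mc i)⁻¹ := fun i hi =>
    csInf_le (Set.toFinite _).bddBelow (Set.mem_insert_of_mem _ ⟨i, hI.mp hi, rfl⟩)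
  have hone_le_cS : 1 ≤ cS := le_csSup (Set.toFinite _).bddAbove (Set.mem_insert _ _)
  have hle_cS : ∀ i ∈ I, 2 * (mc i)⁻¹ * ‖P i‖ ^ 2 ≤ cS := fun i hi =>
    le_csSup (Set.toFinite _).bddAbove (Set.mem_insert_of_mem _ ⟨i, hI.mp hi, rfl⟩)
  refine ⟨?_, ?_⟩
  · calc CG⁻¹ ^ 2 * cI * (∑ i ∈ I, S i ^ 2 + ∑ i ∈ J, ‖fm i - Gm i w‖ ^ 2)
        = CG⁻¹ ^ 2 * (∑ i ∈ I, cI * S i ^ 2 + ∑ i ∈ J, cI * ‖fm i - Gm i w‖ ^ 2) := by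
          rw [mul_assoc, mul_add, Finset.mul_sum, Finset.mul_sum]
      _ ≤ CG⁻¹ ^ 2 * (∑ i ∈ I, ‖Gd i (u - w)‖ ^ 2 + ∑ i ∈ J, ‖Gm i (u - w)‖ ^ 2) := by
          gcongr with i hi i hi
          · rw [hres_d i hi]
            exact mul_discreteDualNorm_sq_le (hMc i hi) (hcI_le i hi) (hupper i hi) _
          · rw [hres_m i hi]
            exact mul_le_of_le_one_left (sq_nonneg _) hcI_le_one
      _ ≤ CG⁻¹ ^ 2 * (CG ^ 2 * ‖u - w‖ ^ 2) := by gcongr; exact hCG _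
      _ = ‖u - w‖ ^ 2 := by field_simp
  · calc ‖u - w‖ ^ 2
        ≤ CGinv ^ 2 * (∑ i ∈ I, ‖Gd i (u - w)‖ ^ 2 + ∑ i ∈ J, ‖Gm i (u - w)‖ ^ 2) := hCGinv _
      _ ≤ CGinv ^ 2 * (∑ i ∈ I, (cS * S i ^ 2 +
              2 * ‖(fd i).comp (ContinuousLinearMap.id ℝ (Y i) - P i)‖ ^ 2) +
            ∑ i ∈ J, cS * ‖fm i - Gm i w‖ ^ 2) := by
          gcongr with i hi i hi
          · rw [hres_d i hi]
            exact norm_sub_sq_le_of_fortin (hmc i (hI.mp hi)) (hMc i hi).le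
              (fun y hy => (hequiv i (hI.mp hi) y hy).1) (hupper i hi) (hPrange i (hI.mp hi))
              (hle_cS i hi) (fd i) (Gd i w) (hFortin i (hI.mp hi) w hw)
          · rw [hres_m i hi]
            exact le_mul_of_one_le_left (sq_nonneg _) hone_le_cS
      _ = _ := by
          rw [Finset.sum_add_distrib, ← Finset.mul_sum, ← Finset.mul_sum, ← Finset.mul_sum]
          ring

/-- A posteriori error estimation for the practical MINRES method.
`X` is a real Hilbert space, `0 ≤ k ≤ m`, `m ≥ 1`, and `Y i` (`i : Fin m`) are real
Hilbert spaces. The operator `G = (G₁,…,G_m) ∈ Lis(X,V)`, where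
`V = Y₁' × ⋯ × Y_k' × Y_{k+1} × ⋯ × Y_m` carries the Hilbertian product norm, is encoded
componentwise: `Gd i` (`i < k`, dual-valued components) and `Gm i` (`i ≥ k`), together
with constants `CG ≥ ‖G‖` and `CGinv ≥ ‖G⁻¹‖` realized by the two-sided bound
`‖x‖²/CGinv² ≤ Σ_{i<k}‖Gd i x‖² + Σ_{i≥k}‖Gm i x‖² ≤ CG²‖x‖²` (so the stated
inequalities in particular hold for `CG = ‖G‖`, `CGinv = ‖G⁻¹‖`). The data is
`f = (fd,fm) ∈ V` and `u := G⁻¹f`, i.e. `Gd i u = fd i` (`i < k`), `Gm i u = fm i`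
(`i ≥ k`). For `i < k`, `Yd i ⊆ Y i` is a closed subspace carrying a discrete inner
product `ip i` with norm `‖y‖_{Y_i^δ} = √(ip i y y)` satisfying
`mc i · ‖y‖_{Y_i^δ}² ≤ ‖y‖² ≤ Mc i · ‖y‖_{Y_i^δ}²` on `Yd i`, and `P i` is a Fortin
interpolator. Then for every `w ∈ Xδ` the computable estimator
`E(w,f)² = Σ_{i<k} sup_{0≠y∈Yd i} |(fd i − Gd i w)(y)|²/‖y‖_{Y_i^δ}²
          + Σ_{i≥k} ‖fm i − Gm i w‖²`
satisfies the stated two-sided bound with the oscillation term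
`Σ_{i<k} ‖(Id − (P i)')(fd i)‖²`. -/
theorem stmt13
    {X : Type*} [NormedAddCommGroup X] [InnerProductSpace ℝ X] [CompleteSpace X]
    {m k : ℕ} (hm : 0 < m) (hk : k ≤ m)
    (Y : Fin m → Type*) [∀ i, NormedAddCommGroup (Y i)] [∀ i, InnerProductSpace ℝ (Y i)]
    [∀ i, CompleteSpace (Y i)]
    (Gd : ∀ i : Fin m, X →L[ℝ] (Y i →L[ℝ] ℝ))
    (Gm : ∀ i : Fin m, X →L[ℝ] Y i)
    (CG CGinv : ℝ) (hCG0 : 0 < CG) (hCGinv0 : 0 < CGinv)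
    (hCG : ∀ x : X,
      (∑ i ∈ Finset.univ.filter (fun i : Fin m => (i : ℕ) < k), ‖Gd i x‖ ^ 2) +
      (∑ i ∈ Finset.univ.filter (fun i : Fin m => ¬ (i : ℕ) < k), ‖Gm i x‖ ^ 2) ≤
        CG ^ 2 * ‖x‖ ^ 2)
    (hCGinv : ∀ x : X,
      ‖x‖ ^ 2 ≤ CGinv ^ 2 *
        ((∑ i ∈ Finset.univ.filter (fun i : Fin m => (i : ℕ) < k), ‖Gd i x‖ ^ 2) +
         (∑ i ∈ Finset.univ.filter (fun i : Fin m => ¬ (i : ℕ) < k), ‖Gm i x‖ ^ 2)))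
    (hGbij : Function.Bijective fun x : X =>
      ((fun i : {i : Fin m // (i : ℕ) < k} => Gd i x),
       (fun i : {i : Fin m // ¬ (i : ℕ) < k} => Gm i x)))
    (fd : ∀ i : Fin m, Y i →L[ℝ] ℝ) (fm : ∀ i : Fin m, Y i)
    (u : X)
    (hud : ∀ i : Fin m, (i : ℕ) < k → Gd i u = fd i)
    (hum : ∀ i : Fin m, ¬ (i : ℕ) < k → Gm i u = fm i)
    (Xδ : Submodule ℝ X)
    (Yd : ∀ i : Fin m, Submodule ℝ (Y i)) (hYd : ∀ i, IsClosed ((Yd i : Set (Y i))))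
    (ip : ∀ i : Fin m, Y i → Y i → ℝ)
    (hip_symm : ∀ i, ∀ y z : Y i, y ∈ Yd i → z ∈ Yd i → ip i y z = ip i z y)
    (hip_add : ∀ i, ∀ x y z : Y i, x ∈ Yd i → y ∈ Yd i → z ∈ Yd i →
        ip i (x + y) z = ip i x z + ip i y z)
    (hip_smul : ∀ i, ∀ (c : ℝ) (y z : Y i), y ∈ Yd i → z ∈ Yd i →
        ip i (c • y) z = c * ip i y z)
    (hip_pos : ∀ i : Fin m, (i : ℕ) < k → ∀ y ∈ Yd i, y ≠ 0 → 0 < ip i y y)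
    (mc Mc : Fin m → ℝ)
    (hmc : ∀ i : Fin m, (i : ℕ) < k → 0 < mc i)
    (hmM : ∀ i : Fin m, (i : ℕ) < k → mc i ≤ Mc i)
    (hequiv : ∀ i : Fin m, (i : ℕ) < k → ∀ y ∈ Yd i,
        mc i * ip i y y ≤ ‖y‖ ^ 2 ∧ ‖y‖ ^ 2 ≤ Mc i * ip i y y)
    (P : ∀ i : Fin m, Y i →L[ℝ] Y i)
    (hPrange : ∀ i : Fin m, (i : ℕ) < k → ∀ y : Y i, P i y ∈ Yd i)
    (hFortin : ∀ i : Fin m, (i : ℕ) < k → ∀ z ∈ Xδ, ∀ y : Y i, Gd i z (y - P i y) = 0) :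
    ∀ w ∈ Xδ,
      (CG⁻¹ ^ 2 *
          sInf (insert (1 : ℝ) ((fun i : Fin m => (Mc i)⁻¹) '' {i : Fin m | (i : ℕ) < k})) *
          ((∑ i ∈ Finset.univ.filter (fun i : Fin m => (i : ℕ) < k),
              (⨆ y : Yd i,
                |(fd i - Gd i w) (y : Y i)| / Real.sqrt (ip i (y : Y i) (y : Y i))) ^ 2) +
           (∑ i ∈ Finset.univ.filter (fun i : Fin m => ¬ (i : ℕ) < k),
              ‖fm i - Gm i w‖ ^ 2)) ≤
        ‖u - w‖ ^ 2) ∧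
      (‖u - w‖ ^ 2 ≤
        CGinv ^ 2 *
          sSup (insert (1 : ℝ)
            ((fun i : Fin m => 2 * (mc i)⁻¹ * ‖P i‖ ^ 2) '' {i : Fin m | (i : ℕ) < k})) *
          ((∑ i ∈ Finset.univ.filter (fun i : Fin m => (i : ℕ) < k),
              (⨆ y : Yd i,
                |(fd i - Gd i w) (y : Y i)| / Real.sqrt (ip i (y : Y i) (y : Y i))) ^ 2) +
           (∑ i ∈ Finset.univ.filter (fun i : Fin m => ¬ (i : ℕ) < k),
              ‖fm i - Gm i w‖ ^ 2)) +
        2 * CGinv ^ 2 *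
          ∑ i ∈ Finset.univ.filter (fun i : Fin m => (i : ℕ) < k),
            ‖(fd i).comp (ContinuousLinearMap.id ℝ (Y i) - P i)‖ ^ 2) :=
  stmt13_general Y Gd Gm CG CGinv hCG0 hCG hCGinv fd fm u hud hum Xδ Yd ip mc Mc hmc hmM hequiv P
    hPrange hFortin
end

section
/- Let X be a real normed space, Y a real Hilbert space, G_i : X → Y' a bounded linear map, X^δ ⊆ X and Y^δ ⊆ Y linear subspaces, u ∈ X, and set f_i := G_i u ∈ Y'. Suppose Π : Y → Y is a bounded linear map with range contained in Y^δ and (G_i z)(y − Πy) = 0 for all z ∈ X^δ and y ∈ Y. Then ‖(Id − Π')f_i‖_{Y'} ≤ ‖Id − Π‖_{L(Y,Y)} · ‖G_i‖_{L(X,Y')} · inf_{w ∈ X^δ} ‖u − w‖_X, where Π' : Y' → Y' is the adjoint of Π, (Π' g)(y) := g(Πy). (In particular, applying this with a projector Π onto Y^δ satisfying ‖Id − Π‖ = 1/γ_i^δ, the data-oscillation term ‖(Id − Π')f_i‖_{Y'} is bounded by (1/γ_i^δ)·‖G_i‖_{L(X,Y')} times the best approximation error inf_{w ∈ X^δ}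 ‖u − w‖_X.) -/
namespace ContinuousLinearMap

variable {𝕜 X Y Z W : Type*} [NontriviallyNormedField 𝕜]
  [SeminormedAddCommGroup X] [NormedSpace 𝕜 X] [SeminormedAddCommGroup Y] [NormedSpace 𝕜 Y]
  [SeminormedAddCommGroup Z] [NormedSpace 𝕜 Z] [SeminormedAddCommGroup W] [NormedSpace 𝕜 W]

theorem apply_comp_eq_apply_sub_comp (G : X →L[𝕜] Y →L[𝕜] Z) (T : W →L[𝕜] Y) (u : X) {w : X}
    (hw : (G w).comp T = 0) : (G u).comp T = (G (u - w)).comp T := by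
  rw [map_sub, sub_comp, hw, sub_zero]

theorem opNorm_apply_comp_le (G : X →L[𝕜] Y →L[𝕜] Z) (T : W →L[𝕜] Y) (x : X) :
    ‖(G x).comp T‖ ≤ ‖T‖ * ‖G‖ * ‖x‖ :=
  calc ‖(G x).comp T‖ ≤ ‖G x‖ * ‖T‖ := opNorm_comp_le _ _
    _ ≤ ‖G‖ * ‖x‖ * ‖T‖ := by gcongr; exact G.le_opNorm x
    _ = ‖T‖ * ‖G‖ * ‖x‖ := by ring

theorem opNorm_apply_comp_le_mul_iInf (G : X →L[𝕜] Y →L[𝕜] Z) (T : W →L[𝕜] Y)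
    (S : Submodule 𝕜 X) (hS : ∀ z ∈ S, (G z).comp T = 0) (u : X) :
    ‖(G u).comp T‖ ≤ ‖T‖ * ‖G‖ * ⨅ w : S, ‖u - (w : X)‖ := by
  rw [Real.mul_iInf_of_nonneg (by positivity)]
  refine le_ciInf fun w => ?_
  rw [apply_comp_eq_apply_sub_comp G T u (hS w w.2)]
  exact opNorm_apply_comp_le G T _

end ContinuousLinearMap

theorem stmt14_general
    {X Y : Type*}
    [NormedAddCommGroup X] [NormedSpace ℝ X]
    [NormedAddCommGroup Y] [InnerProductSpace ℝ Y]
    (Gi : X →L[ℝ] (Y →L[ℝ] ℝ))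
    (Xδ : Submodule ℝ X)
    (u : X)
    (P : Y →L[ℝ] Y)
    (hFortin : ∀ z ∈ Xδ, ∀ y : Y, Gi z (y - P y) = 0) :
    ‖(Gi u).comp (ContinuousLinearMap.id ℝ Y - P)‖ ≤
      ‖ContinuousLinearMap.id ℝ Y - P‖ * ‖Gi‖ * ⨅ w : Xδ, ‖u - (w : X)‖ :=
  Gi.opNorm_apply_comp_le_mul_iInf _ Xδ (fun z hz => ContinuousLinearMap.ext (hFortin z hz)) u

/-- Let `X` be a real normed space, `Y` a real Hilbert space,
`Gᵢ : X → Y'` bounded linear, `Xδ ⊆ X`, `Yδ ⊆ Y` subspaces, `u ∈ X` and `fᵢ := Gᵢu`.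
If `P : Y → Y` is a bounded linear map with range in `Yδ` and `(Gᵢz)(y − Py) = 0` for
all `z ∈ Xδ`, `y ∈ Y`, then
`‖(Id − P')fᵢ‖_{Y'} ≤ ‖Id − P‖ ‖Gᵢ‖ inf_{w ∈ Xδ} ‖u − w‖`, where
`(Id − P')fᵢ = fᵢ ∘ (Id − P)`. -/
theorem stmt14
    {X Y : Type*}
    [NormedAddCommGroup X] [NormedSpace ℝ X]
    [NormedAddCommGroup Y] [InnerProductSpace ℝ Y] [CompleteSpace Y]
    (Gi : X →L[ℝ] (Y →L[ℝ] ℝ))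
    (Xδ : Submodule ℝ X) (Yδ : Submodule ℝ Y)
    (u : X)
    (P : Y →L[ℝ] Y)
    (hPrange : ∀ y : Y, P y ∈ Yδ)
    (hFortin : ∀ z ∈ Xδ, ∀ y : Y, Gi z (y - P y) = 0) :
    ‖(Gi u).comp (ContinuousLinearMap.id ℝ Y - P)‖ ≤
      ‖ContinuousLinearMap.id ℝ Y - P‖ * ‖Gi‖ * ⨅ w : Xδ, ‖u - (w : X)‖ :=
  stmt14_general Gi Xδ u P hFortin
end
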